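/- arXiv:1805.11454 — 8 statements merged into one kernel-verified Lean document; each statement's English description precedes it below -/
import Mathlib

section
/- Let n ≥ 1 and let W ∈ ℝ^{n×n} be a nonnegative doubly stochastic matrix (W𝟙 = 𝟙 and 𝟙ᵀW = 𝟙ᵀ) with w_{ii} > 0 for at least one index i, such that w_{ij} > 0 iff w_{ji} > 0 and the graph on {1,…,n} with edge set {{i,j} : i ≠ j, w_{ij} > 0} is connected. Let ρ_w denote the operator 2-norm of W − (1/n)𝟙𝟙ᵀ. Then ρ_w < 1, and for every p ≥ 1 and every ω ∈ ℝ^{n×p}, ‖Wω − 𝟙ω̄‖_F ≤ ρ_w ‖ω − 𝟙ω̄‖_F, where ω̄ := (1/n)𝟙ᵀω ∈ ℝ^{1×p} and ‖·‖_F is the Frobenius norm. -/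
open Matrix

/-- Frobenius norm of a real matrix. -/
noncomputable def frobNorm {n p : ℕ} (M : Matrix (Fin n) (Fin p) ℝ) : ℝ :=
  Real.sqrt (∑ i, ∑ j, (M i j) ^ 2)

/-- Operator 2-norm of a real matrix, i.e. the norm of the induced map between
Euclidean spaces. -/
noncomputable def l2OpNorm {m n : ℕ} (M : Matrix (Fin m) (Fin n) ℝ) : ℝ :=
  ‖LinearMap.toContinuousLinearMap (Matrix.toEuclideanLin M)‖

/-- The matrix `𝟙 z̄` whose every row is the average of the rows of `z`. -/
noncomputable def onesAvg {n p : ℕ} (z : Matrix (Fin n) (Fin p) ℝ) : Matrix (Fin n) (Fin p) ℝ :=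
  Matrix.of fun _ j => (n : ℝ)⁻¹ * ∑ i, z i j

/-!
For doubly stochastic `W`, summing the row-wise variance identities gives
`∑ᵢ ∑ⱼ ∑ₖ wᵢⱼ wᵢₖ (xⱼ - xₖ)² = 2 (‖x‖² - ‖W x‖²)`, so `‖W x‖ < ‖x‖` unless `x` is constant on the
support of every row. A positive diagonal entry and connectivity of the support graph propagate
this to `x` being constant. With `J = 𝟙𝟙ᵀ / n`, the map `W - J` kills constants, and
`‖(W - J) x‖² = ‖W x‖² - n x̄² ≤ ‖W x‖²` because `W` preserves the mean; hence
`‖(W - J) x‖ < ‖x‖` for `x ≠ 0`, and compactness of the unit ball gives `ρ_w < 1`.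
The Frobenius bound holds column by column, since `W ω - J ω = (W - J)(ω - J ω)`.
-/

theorem ContinuousLinearMap.opNorm_lt_one_of_norm_apply_lt {𝕜 E F : Type*}
    [DenselyNormedField 𝕜] [NormedAddCommGroup E] [NormedSpace 𝕜 E] [ProperSpace E]
    [SeminormedAddCommGroup F] [NormedSpace 𝕜 F] (f : E →L[𝕜] F)
    (hf : ∀ x ≠ 0, ‖f x‖ < ‖x‖) : ‖f‖ < 1 := by
  rw [← f.sSup_unitClosedBall_eq_norm, (isCompact_closedBall 0 1).sSup_lt_iff_of_continuous
    (Metric.nonempty_closedBall.2 zero_le_one) (by fun_prop)]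
  intro x hx
  rcases eq_or_ne x 0 with rfl | hx0
  · simp
  · exact (hf x hx0).trans_le (mem_closedBall_zero_iff.1 hx)

theorem sum_mulVec_sq_le_l2OpNorm_sq {m n : ℕ} (A : Matrix (Fin m) (Fin n) ℝ) (v : Fin n → ℝ) :
    ∑ i, (A *ᵥ v) i ^ 2 ≤ l2OpNorm A ^ 2 * ∑ j, v j ^ 2 := by
  have h := (LinearMap.toContinuousLinearMap (toEuclideanLin A)).le_opNorm (WithLp.toLp 2 v)
  have h2 := pow_le_pow_left₀ (norm_nonneg _) h 2
  rwa [mul_pow, EuclideanSpace.real_norm_sq_eq, EuclideanSpace.real_norm_sq_eq] at h2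

theorem frobNorm_mul_le {m n p : ℕ} (A : Matrix (Fin m) (Fin n) ℝ) (B : Matrix (Fin n) (Fin p) ℝ) :
    frobNorm (A * B) ≤ l2OpNorm A * frobNorm B := by
  have hA : 0 ≤ l2OpNorm A := norm_nonneg _
  rw [frobNorm, frobNorm, ← Real.sqrt_sq hA, ← Real.sqrt_mul (sq_nonneg _)]
  refine Real.sqrt_le_sqrt ?_
  rw [Finset.sum_comm, Finset.sum_comm (f := fun i j => B i j ^ 2), Finset.mul_sum]
  gcongr with j
  exact sum_mulVec_sq_le_l2OpNorm_sq A fun k => B k j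

theorem Finset.sum_sum_mul_mul_sub_sq {ι : Type*} (s : Finset ι) (w y : ι → ℝ) :
    ∑ j ∈ s, ∑ k ∈ s, w j * w k * (y j - y k) ^ 2 =
      2 * ((∑ j ∈ s, w j) * ∑ j ∈ s, w j * y j ^ 2 - (∑ j ∈ s, w j * y j) ^ 2) := by
  have h : ∀ j k, w j * w k * (y j - y k) ^ 2
      = w j * y j ^ 2 * w k + w j * (w k * y k ^ 2) - 2 * (w j * y j) * (w k * y k) :=
    fun j k => by ring
  simp only [h, Finset.sum_add_distrib, Finset.sum_sub_distrib, ← Finset.mul_sum,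
    ← Finset.sum_mul]
  ring

theorem apply_eq_apply_of_connected_fromRel {ι α : Type*} {r : ι → ι → Prop}
    (hrefl : ∃ i, r i i) (hsymm : ∀ i j, r i j → r j i) (hconn : (SimpleGraph.fromRel r).Connected)
    {x : ι → α} (hx : ∀ i j k, r i j → r i k → x j = x k) (j k : ι) : x j = x k := by
  obtain ⟨i₀, hi₀⟩ := hrefl
  -- The value at `a` alone does not cross an edge; the value on all of `a`'s neighbours does.
  have hreach : ∀ a, x a = x i₀ ∧ ∀ b, r a b → x b = x i₀ := by
    intro a
    induction (SimpleGraph.reachable_iff_reflTransGen i₀ a).1 (hconn.preconnected i₀ a) with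
    | refl => exact ⟨rfl, fun b hb => hx i₀ b i₀ hb hi₀⟩
    | @tail a b _ hadj ih =>
      have hab : r a b := hadj.2.elim id (hsymm b a)
      exact ⟨ih.2 b hab, fun c hc => (hx b c a hc (hsymm a b hab)).trans ih.1⟩
  exact (hreach j).1.trans (hreach k).1.symm

noncomputable def avgMatrix (ι : Type*) [Fintype ι] : Matrix ι ι ℝ :=
  (Fintype.card ι : ℝ)⁻¹ • of fun _ _ => 1

section avgMatrix

variable {ι : Type*} [Fintype ι]

theorem avgMatrix_fin (n : ℕ) :
    avgMatrix (Fin n) = (n : ℝ)⁻¹ • of fun _ _ : Fin n => (1 : ℝ) := by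
  rw [avgMatrix, Fintype.card_fin]

theorem onesAvg_eq_avgMatrix_mul {n p : ℕ} (z : Matrix (Fin n) (Fin p) ℝ) :
    onesAvg z = avgMatrix (Fin n) * z := by
  ext i j
  simp [onesAvg, avgMatrix_fin, Matrix.mul_apply, Finset.mul_sum]

theorem avgMatrix_mulVec (x : ι → ℝ) :
    avgMatrix ι *ᵥ x = fun _ => (Fintype.card ι : ℝ)⁻¹ * ∑ j, x j := by
  ext i
  simp [avgMatrix, mulVec, dotProduct, Finset.mul_sum]

theorem avgMatrix_mulVec_one [Nonempty ι] : avgMatrix ι *ᵥ 1 = 1 := by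
  ext i
  simp [avgMatrix_mulVec]

theorem mul_avgMatrix {A : Matrix ι ι ℝ} (hA : A *ᵥ 1 = 1) : A * avgMatrix ι = avgMatrix ι := by
  ext i j
  have := congrFun hA i
  simp_all [avgMatrix, Matrix.mul_apply, mulVec, dotProduct, ← Finset.sum_mul]

theorem avgMatrix_mul {A : Matrix ι ι ℝ} (hA : 1 ᵥ* A = 1) : avgMatrix ι * A = avgMatrix ι := by
  ext i j
  have := congrFun hA j
  simp_all [avgMatrix, Matrix.mul_apply, vecMul, dotProduct, ← Finset.mul_sum]

theorem sub_avgMatrix_mul_sub_avgMatrix_mul [Nonempty ι] {κ : Type*} {A : Matrix ι ι ℝ}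
    (hA : A *ᵥ 1 = 1) (Z : Matrix ι κ ℝ) :
    (A - avgMatrix ι) * (Z - avgMatrix ι * Z) = A * Z - avgMatrix ι * Z := by
  have hkill : (A - avgMatrix ι) * avgMatrix ι = 0 := by
    rw [Matrix.sub_mul, mul_avgMatrix hA, mul_avgMatrix avgMatrix_mulVec_one, sub_self]
  rw [Matrix.mul_sub, ← Matrix.mul_assoc, hkill, Matrix.zero_mul, sub_zero, Matrix.sub_mul]

theorem sum_sub_avgMatrix_mulVec_sq_le (u : ι → ℝ) :
    ∑ i, (u - avgMatrix ι *ᵥ u) i ^ 2 ≤ ∑ i, u i ^ 2 := by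
  simp only [avgMatrix_mulVec, Pi.sub_apply]
  set c : ℝ := (Fintype.card ι : ℝ)
  have h : ∑ i, (u i - c⁻¹ * ∑ j, u j) ^ 2 = ∑ i, u i ^ 2 - c⁻¹ * (∑ j, u j) ^ 2 := by
    simp only [sub_sq, Finset.sum_add_distrib, Finset.sum_sub_distrib,
      Finset.sum_const, Finset.card_univ, nsmul_eq_mul, ← Finset.sum_mul, ← Finset.mul_sum]
    rcases eq_or_ne c 0 with hc | hc
    · simp [hc]
    · field_simp
      ring
  have : 0 ≤ c⁻¹ * (∑ j, u j) ^ 2 := by positivity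
  linarith

end avgMatrix

section doublyStochastic

variable {ι : Type*} [Fintype ι] [DecidableEq ι] {W : Matrix ι ι ℝ}

theorem sum_sum_sum_mul_mul_sub_sq_of_mem_doublyStochastic (hW : W ∈ doublyStochastic ℝ ι)
    (x : ι → ℝ) :
    ∑ i, ∑ j, ∑ k, W i j * W i k * (x j - x k) ^ 2 = 2 * (∑ j, x j ^ 2 - ∑ i, (W *ᵥ x) i ^ 2) := by
  have hcol : ∑ i, ∑ j, W i j * x j ^ 2 = ∑ j, x j ^ 2 := by
    rw [Finset.sum_comm]
    simp [← Finset.sum_mul, sum_col_of_mem_doublyStochastic hW]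
  simp only [Finset.sum_sum_mul_mul_sub_sq, sum_row_of_mem_doublyStochastic hW, one_mul,
    ← Finset.mul_sum, Finset.sum_sub_distrib, hcol, mulVec, dotProduct]

theorem sum_mulVec_sq_lt_of_mem_doublyStochastic (hW : W ∈ doublyStochastic ℝ ι)
    (hWdiag : ∃ i, 0 < W i i) (hWsymm : ∀ i j, 0 < W i j → 0 < W j i)
    (hconn : (SimpleGraph.fromRel fun i j => 0 < W i j).Connected)
    {x : ι → ℝ} (hx : ∃ j k, x j ≠ x k) :
    ∑ i, (W *ᵥ x) i ^ 2 < ∑ j, x j ^ 2 := by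
  obtain ⟨i, j, k, hij, hik, hjk⟩ : ∃ i j k, 0 < W i j ∧ 0 < W i k ∧ x j ≠ x k := by
    obtain ⟨j, k, hjk⟩ := hx
    by_contra! h
    exact hjk (apply_eq_apply_of_connected_fromRel hWdiag hWsymm hconn h j k)
  have hterm : ∀ i j k, 0 ≤ W i j * W i k * (x j - x k) ^ 2 := fun i j k =>
    mul_nonneg (mul_nonneg (nonneg_of_mem_doublyStochastic hW)
      (nonneg_of_mem_doublyStochastic hW)) (sq_nonneg _)
  have hpos : 0 < ∑ i, ∑ j, ∑ k, W i j * W i k * (x j - x k) ^ 2 := by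
    have hjk' : 0 < (x j - x k) ^ 2 := by simpa [sq_pos_iff, sub_eq_zero] using hjk
    refine Finset.sum_pos' (fun a _ => Finset.sum_nonneg fun b _ => Finset.sum_nonneg
      fun c _ => hterm a b c) ⟨i, Finset.mem_univ i, Finset.sum_pos'
        (fun b _ => Finset.sum_nonneg fun c _ => hterm i b c) ⟨j, Finset.mem_univ j,
          Finset.sum_pos' (fun c _ => hterm i j c) ⟨k, Finset.mem_univ k, by positivity⟩⟩⟩
  linarith [sum_sum_sum_mul_mul_sub_sq_of_mem_doublyStochastic hW x]

theorem sum_sub_avgMatrix_mulVec_sq_lt (hW : W ∈ doublyStochastic ℝ ι)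
    (hWdiag : ∃ i, 0 < W i i) (hWsymm : ∀ i j, 0 < W i j → 0 < W j i)
    (hconn : (SimpleGraph.fromRel fun i j => 0 < W i j).Connected)
    {x : ι → ℝ} (hx : x ≠ 0) :
    ∑ i, ((W - avgMatrix ι) *ᵥ x) i ^ 2 < ∑ i, x i ^ 2 := by
  by_cases hconst : ∀ j k, x j = x k
  · have : Nonempty ι := hWdiag.nonempty
    obtain ⟨i, hi⟩ := Function.ne_iff.1 hx
    have hx1 : x = x i • 1 := funext fun j => by simp [hconst j i]
    have hzero : (W - avgMatrix ι) *ᵥ x = 0 := by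
      rw [hx1, mulVec_smul, sub_mulVec, mulVec_one_of_mem_doublyStochastic hW,
        avgMatrix_mulVec_one, sub_self, smul_zero]
    rw [hzero]
    simpa using Finset.sum_pos' (fun j _ => sq_nonneg (x j)) ⟨i, Finset.mem_univ i, sq_pos_iff.2 hi⟩
  · push Not at hconst
    calc ∑ i, ((W - avgMatrix ι) *ᵥ x) i ^ 2
        = ∑ i, (W *ᵥ x - avgMatrix ι *ᵥ (W *ᵥ x)) i ^ 2 := by
          rw [sub_mulVec, mulVec_mulVec, avgMatrix_mul (one_vecMul_of_mem_doublyStochastic hW)]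
      _ ≤ ∑ i, (W *ᵥ x) i ^ 2 := sum_sub_avgMatrix_mulVec_sq_le _
      _ < ∑ i, x i ^ 2 := sum_mulVec_sq_lt_of_mem_doublyStochastic hW hWdiag hWsymm hconn hconst

end doublyStochastic

theorem l2OpNorm_sub_avgMatrix_lt_one {n : ℕ} {W : Matrix (Fin n) (Fin n) ℝ}
    (hW : W ∈ doublyStochastic ℝ (Fin n)) (hWdiag : ∃ i, 0 < W i i)
    (hWsymm : ∀ i j, 0 < W i j → 0 < W j i)
    (hconn : (SimpleGraph.fromRel fun i j => 0 < W i j).Connected) :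
    l2OpNorm (W - avgMatrix (Fin n)) < 1 := by
  refine ContinuousLinearMap.opNorm_lt_one_of_norm_apply_lt _ fun x hx => ?_
  refine lt_of_pow_lt_pow_left₀ 2 (norm_nonneg _) ?_
  rw [EuclideanSpace.real_norm_sq_eq, EuclideanSpace.real_norm_sq_eq]
  exact sum_sub_avgMatrix_mulVec_sq_lt hW hWdiag hWsymm hconn (x := x.ofLp) (by simpa using hx)

theorem stmt0_general (n : ℕ) (W : Matrix (Fin n) (Fin n) ℝ)
    (hWnonneg : ∀ i j, 0 ≤ W i j)
    (hWrow : W.mulVec (fun _ => (1 : ℝ)) = fun _ => (1 : ℝ))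
    (hWcol : Matrix.vecMul (fun _ => (1 : ℝ)) W = fun _ => (1 : ℝ))
    (hWdiag : ∃ i, 0 < W i i)
    (hWsymm : ∀ i j, 0 < W i j ↔ 0 < W j i)
    (hconn : (SimpleGraph.fromRel (fun i j : Fin n => 0 < W i j)).Connected) :
    l2OpNorm (W - (n : ℝ)⁻¹ • Matrix.of (fun _ _ : Fin n => (1 : ℝ))) < 1 ∧
      ∀ p : ℕ, 1 ≤ p → ∀ ω : Matrix (Fin n) (Fin p) ℝ,
        frobNorm (W * ω - onesAvg ω) ≤
          l2OpNorm (W - (n : ℝ)⁻¹ • Matrix.of (fun _ _ : Fin n => (1 : ℝ))) *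
            frobNorm (ω - onesAvg ω) := by
  have : Nonempty (Fin n) := hWdiag.nonempty
  have hW : W ∈ doublyStochastic ℝ (Fin n) := ⟨hWnonneg, hWrow, hWcol⟩
  rw [← avgMatrix_fin]
  refine ⟨l2OpNorm_sub_avgMatrix_lt_one hW hWdiag (fun i j => (hWsymm i j).1) hconn,
    fun p _ ω => ?_⟩
  rw [onesAvg_eq_avgMatrix_mul, ← sub_avgMatrix_mul_sub_avgMatrix_mul hWrow]
  exact frobNorm_mul_le _ _

theorem stmt0 (n : ℕ) (hn : 1 ≤ n) (W : Matrix (Fin n) (Fin n) ℝ)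
    (hWnonneg : ∀ i j, 0 ≤ W i j)
    (hWrow : W.mulVec (fun _ => (1 : ℝ)) = fun _ => (1 : ℝ))
    (hWcol : Matrix.vecMul (fun _ => (1 : ℝ)) W = fun _ => (1 : ℝ))
    (hWdiag : ∃ i, 0 < W i i)
    (hWsymm : ∀ i j, 0 < W i j ↔ 0 < W j i)
    (hconn : (SimpleGraph.fromRel (fun i j : Fin n => 0 < W i j)).Connected) :
    l2OpNorm (W - (n : ℝ)⁻¹ • Matrix.of (fun _ _ : Fin n => (1 : ℝ))) < 1 ∧
      ∀ p : ℕ, 1 ≤ p → ∀ ω : Matrix (Fin n) (Fin p) ℝ,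
        frobNorm (W * ω - onesAvg ω) ≤
          l2OpNorm (W - (n : ℝ)⁻¹ • Matrix.of (fun _ _ : Fin n => (1 : ℝ))) *
            frobNorm (ω - onesAvg ω) :=
  stmt0_general n W hWnonneg hWrow hWcol hWdiag hWsymm hconn
end

section
/- Let p ≥ 1, n ≥ 1, 0 < μ ≤ L, σ > 0 and 0 < α < 2/(μ + L). For i = 1,…,n let f_i : ℝ^p → ℝ be μ-strongly convex with L-Lipschitz continuous gradient, let f := (1/n)∑_i f_i with unique minimizer x*. Fix x_1,…,x_n ∈ ℝ^p, put x̄ := (1/n)∑_i x_i and h := (1/n)∑_i ∇f_i(x_i). Let ȳ be a random vector in ℝ^p with E[ȳ] = h and E[‖ȳ − h‖²] ≤ σ²/n. Then E[‖x̄ − αȳ − x*‖²] ≤ (1 − αμ)‖x̄ − x*‖² + (αL²/(μn))(1 + αμ) ∑_{i=1}^n ‖x_i − x̄‖² + α²σ²/n. -/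
/-!
For the average `f̄` of the `f_i`, the gradient `∇f̄` is μ-strongly monotone and L-Lipschitz, and
co-coercivity of the gradient of the convex, `(L - μ)`-smooth function `f̄ - μ/2 ‖·‖²` gives
`‖∇f̄ x - ∇f̄ y‖² + μL ‖x - y‖² ≤ (μ + L) ⟪∇f̄ x - ∇f̄ y, x - y⟫`. Since `∇f̄ x* = 0`, this
makes the exact step `x̄ - α ∇f̄ x̄` contract the distance to `x*` by `1 - αμ` when
`α ≤ 2/(μ + L)`. The step actually taken uses `h` instead of `∇f̄ x̄`; Young's inequality with
weight `αμ` and the Lipschitz bound `‖∇f̄ x̄ - h‖² ≤ (L²/n) ∑ ‖x_i - x̄‖²` price this error.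
Finally, since `E ȳ = h`, the bias-variance identity `E ‖a - αȳ‖² = ‖a - αh‖² + α² E ‖ȳ - h‖²`
adds the noise term.
-/

open MeasureTheory Finset
open scoped RealInnerProductSpace

section InnerProductSpace

variable {E : Type*} [NormedAddCommGroup E] [InnerProductSpace ℝ E]

theorem norm_sub_smul_sq (u v : E) (a : ℝ) :
    ‖u - a • v‖ ^ 2 = ‖u‖ ^ 2 - 2 * a * ⟪u, v⟫ + a ^ 2 * ‖v‖ ^ 2 := by
  rw [norm_sub_sq_real, real_inner_smul_right, norm_smul, mul_pow, Real.norm_eq_abs, sq_abs]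
  ring

theorem norm_add_sq_le_young (u v : E) {t : ℝ} (ht : 0 < t) :
    ‖u + v‖ ^ 2 ≤ (1 + t) * ‖u‖ ^ 2 + (1 + t⁻¹) * ‖v‖ ^ 2 := by
  have hamgm : 2 * (‖u‖ * ‖v‖) ≤ t * ‖u‖ ^ 2 + t⁻¹ * ‖v‖ ^ 2 := by
    have h := mul_nonneg (inv_pos.2 ht).le (sq_nonneg (t * ‖u‖ - ‖v‖))
    have ht' : t⁻¹ * t = 1 := inv_mul_cancel₀ ht.ne'
    nlinarith
  rw [norm_add_sq_real]
  nlinarith [real_inner_le_norm u v]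

theorem norm_sub_smul_sq_le_of_coercive {d g : E} {μ L α : ℝ} (hα : 0 ≤ α)
    (hαμL : α * (μ + L) ≤ 2) (hsc : μ * ‖d‖ ^ 2 ≤ ⟪g, d⟫)
    (hco : ‖g‖ ^ 2 + μ * L * ‖d‖ ^ 2 ≤ (μ + L) * ⟪g, d⟫) :
    ‖d - α • g‖ ^ 2 ≤ (1 - α * μ) ^ 2 * ‖d‖ ^ 2 := by
  rw [norm_sub_smul_sq, real_inner_comm]
  nlinarith [mul_nonneg (mul_nonneg hα (sub_nonneg.2 hαμL)) (sub_nonneg.2 hsc),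
    mul_nonneg (sq_nonneg α) (sub_nonneg.2 hco)]

theorem norm_sub_smul_sq_le_of_norm_sub_le {d g h : E} {μ α ε : ℝ} (hα : 0 < α) (hμ : 0 < μ)
    (hαμ : α * μ ≤ 1) (hstep : ‖d - α • g‖ ^ 2 ≤ (1 - α * μ) ^ 2 * ‖d‖ ^ 2)
    (herr : ‖g - h‖ ^ 2 ≤ ε) :
    ‖d - α • h‖ ^ 2 ≤ (1 - α * μ) * ‖d‖ ^ 2 + α / μ * (1 + α * μ) * ε := by
  have hαμ0 : 0 < α * μ := mul_pos hα hμ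
  have hyoung := norm_add_sq_le_young (d - α • g) (α • (g - h)) hαμ0
  rw [show d - α • g + α • (g - h) = d - α • h by module, norm_smul, mul_pow, Real.norm_eq_abs,
    sq_abs] at hyoung
  have hfirst : (1 + α * μ) * ‖d - α • g‖ ^ 2 ≤ (1 - α * μ) * ‖d‖ ^ 2 :=
    calc (1 + α * μ) * ‖d - α • g‖ ^ 2 ≤ (1 + α * μ) * ((1 - α * μ) ^ 2 * ‖d‖ ^ 2) := by gcongr
      _ = (1 - α * μ) * (1 - (α * μ) ^ 2) * ‖d‖ ^ 2 := by ring
      _ ≤ (1 - α * μ) * 1 * ‖d‖ ^ 2 := by gcongr; nlinarith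
      _ = (1 - α * μ) * ‖d‖ ^ 2 := by ring
  have hsecond : (1 + (α * μ)⁻¹) * (α ^ 2 * ‖g - h‖ ^ 2) ≤ α / μ * (1 + α * μ) * ε :=
    calc (1 + (α * μ)⁻¹) * (α ^ 2 * ‖g - h‖ ^ 2) = α / μ * (1 + α * μ) * ‖g - h‖ ^ 2 := by
          field_simp
          ring
      _ ≤ α / μ * (1 + α * μ) * ε := by gcongr
  linarith

variable {n : ℕ}

theorem norm_average_le (w : Fin n → E) :
    ‖(n : ℝ)⁻¹ • ∑ i, w i‖ ≤ (n : ℝ)⁻¹ * ∑ i, ‖w i‖ := by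
  rw [norm_smul, norm_inv, Real.norm_natCast]
  gcongr
  exact norm_sum_le _ _

theorem norm_sq_average_le (w : Fin n → E) :
    ‖(n : ℝ)⁻¹ • ∑ i, w i‖ ^ 2 ≤ (n : ℝ)⁻¹ * ∑ i, ‖w i‖ ^ 2 := by
  have hcs : (∑ i, ‖w i‖) ^ 2 ≤ n * ∑ i, ‖w i‖ ^ 2 := by
    simpa using sq_sum_le_card_mul_sum_sq (s := univ) (f := fun i => ‖w i‖)
  calc ‖(n : ℝ)⁻¹ • ∑ i, w i‖ ^ 2 ≤ ((n : ℝ)⁻¹ * ∑ i, ‖w i‖) ^ 2 := by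
        gcongr
        exact norm_average_le w
    _ = (n : ℝ)⁻¹ ^ 2 * (∑ i, ‖w i‖) ^ 2 := by ring
    _ ≤ (n : ℝ)⁻¹ ^ 2 * (n * ∑ i, ‖w i‖ ^ 2) := by gcongr
    _ = (n : ℝ)⁻¹ * ∑ i, ‖w i‖ ^ 2 := by
      rcases eq_or_ne n 0 with rfl | hn
      · simp
      · field_simp

theorem smul_sum_sub_smul_sum {ι : Type*} [Fintype ι] (c : ℝ) (u v : ι → E) :
    c • ∑ i, u i - c • ∑ i, v i = c • ∑ i, (u i - v i) := by
  rw [← smul_sub, ← sum_sub_distrib]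

variable {G : Fin n → E → E}

theorem inner_average_sub_average_ge (hn : n ≠ 0) {μ : ℝ}
    (hsc : ∀ i a b, μ * ‖a - b‖ ^ 2 ≤ ⟪G i a - G i b, a - b⟫) (a b : E) :
    μ * ‖a - b‖ ^ 2 ≤ ⟪(n : ℝ)⁻¹ • ∑ i, G i a - (n : ℝ)⁻¹ • ∑ i, G i b, a - b⟫ := by
  rw [smul_sum_sub_smul_sum, real_inner_smul_left, sum_inner]
  calc μ * ‖a - b‖ ^ 2 = (n : ℝ)⁻¹ * ∑ _i : Fin n, μ * ‖a - b‖ ^ 2 := by simp [hn]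
    _ ≤ _ := by gcongr with i; exact hsc i a b

theorem norm_average_sub_average_le (hn : n ≠ 0) {L : ℝ}
    (hlip : ∀ i a b, ‖G i a - G i b‖ ≤ L * ‖a - b‖) (a b : E) :
    ‖(n : ℝ)⁻¹ • ∑ i, G i a - (n : ℝ)⁻¹ • ∑ i, G i b‖ ≤ L * ‖a - b‖ := by
  rw [smul_sum_sub_smul_sum]
  calc _ ≤ (n : ℝ)⁻¹ * ∑ i, ‖G i a - G i b‖ := norm_average_le _
    _ ≤ (n : ℝ)⁻¹ * ∑ _i : Fin n, L * ‖a - b‖ := by gcongr with i; exact hlip i a b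
    _ = L * ‖a - b‖ := by simp [hn]

theorem norm_sq_average_sub_average_le {L : ℝ} (hlip : ∀ i a b, ‖G i a - G i b‖ ≤ L * ‖a - b‖)
    (y : E) (x : Fin n → E) :
    ‖(n : ℝ)⁻¹ • ∑ i, G i y - (n : ℝ)⁻¹ • ∑ i, G i (x i)‖ ^ 2 ≤
      L ^ 2 / n * ∑ i, ‖x i - y‖ ^ 2 := by
  rw [smul_sum_sub_smul_sum]
  calc _ ≤ (n : ℝ)⁻¹ * ∑ i, ‖G i y - G i (x i)‖ ^ 2 := norm_sq_average_le _
    _ ≤ (n : ℝ)⁻¹ * ∑ i, (L * ‖x i - y‖) ^ 2 := by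
      gcongr with i
      rw [norm_sub_rev (x i)]
      exact hlip i y (x i)
    _ = L ^ 2 / n * ∑ i, ‖x i - y‖ ^ 2 := by simp only [mul_pow, ← mul_sum]; ring

end InnerProductSpace

section Gradient

variable {E : Type*} [NormedAddCommGroup E] [InnerProductSpace ℝ E] [CompleteSpace E]
  {f g : E → ℝ} {f' g' x : E}

theorem HasGradientAt.add (hf : HasGradientAt f f' x) (hg : HasGradientAt g g' x) :
    HasGradientAt (fun y => f y + g y) (f' + g') x := by
  rw [hasGradientAt_iff_hasFDerivAt, map_add]
  exact hf.hasFDerivAt.add hg.hasFDerivAt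

theorem HasGradientAt.const_mul (hf : HasGradientAt f f' x) (c : ℝ) :
    HasGradientAt (fun y => c * f y) (c • f') x := by
  rw [hasGradientAt_iff_hasFDerivAt, map_smul]
  exact hf.hasFDerivAt.const_mul c

theorem HasGradientAt.sum {ι : Type*} (s : Finset ι) {f : ι → E → ℝ} {f' : ι → E}
    (hf : ∀ i ∈ s, HasGradientAt (f i) (f' i) x) :
    HasGradientAt (fun y => ∑ i ∈ s, f i y) (∑ i ∈ s, f' i) x := by
  rw [hasGradientAt_iff_hasFDerivAt, map_sum]
  exact HasFDerivAt.fun_sum fun i hi => (hf i hi).hasFDerivAt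

theorem hasGradientAt_norm_sq (x : E) : HasGradientAt (fun y => ‖y‖ ^ 2) ((2 : ℝ) • x) x := by
  rw [hasGradientAt_iff_hasFDerivAt]
  refine (hasStrictFDerivAt_norm_sq x).hasFDerivAt.congr_fderiv ?_
  ext y
  simp [InnerProductSpace.toDual_apply_apply, two_mul]

theorem IsLocalMin.hasGradientAt_eq_zero (h : IsLocalMin f x) (hf : HasGradientAt f f' x) :
    f' = 0 := by
  simpa using h.hasFDerivAt_eq_zero hf.hasFDerivAt

variable {G : E → E}

theorem hasDerivAt_comp_add_smul (hf : ∀ z, HasGradientAt f (G z) z) (x v : E)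
    (t : ℝ) : HasDerivAt (fun s : ℝ => f (x + s • v)) ⟪G (x + t • v), v⟫ t := by
  have hline : HasDerivAt (fun s : ℝ => x + s • v) v t := by
    simpa using ((hasDerivAt_id t).smul_const v).const_add x
  have h : HasDerivAt (fun s : ℝ => f (x + s • v))
      (InnerProductSpace.toDual ℝ E (G (x + t • v)) v) t :=
    (hf (x + t • v)).hasFDerivAt.comp_hasDerivAt t hline
  simpa [InnerProductSpace.toDual_apply_apply] using h

theorem add_inner_sub_le_of_monotone_gradient (hf : ∀ z, HasGradientAt f (G z) z)
    (hmono : ∀ a b, 0 ≤ ⟪G a - G b, a - b⟫) (x y : E) : f x + ⟪G x, y - x⟫ ≤ f y := by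
  set v := y - x
  have hline := hasDerivAt_comp_add_smul hf x v
  obtain ⟨c, hc, hslope⟩ := exists_hasDerivAt_eq_slope (fun s : ℝ => f (x + s • v)) _ one_pos
    (fun t _ => (hline t).continuousAt.continuousWithinAt) (fun t _ => hline t)
  have hxy : x + (1 : ℝ) • v = y := by simp [v]
  simp only [hxy, zero_smul, add_zero, sub_zero, div_one] at hslope
  have hc' : 0 ≤ c * ⟪G (x + c • v) - G x, v⟫ := by
    simpa [real_inner_smul_right] using hmono (x + c • v) x
  have hinc : 0 ≤ ⟪G (x + c • v) - G x, v⟫ := nonneg_of_mul_nonneg_right hc' hc.1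
  rw [inner_sub_left] at hinc
  linarith

theorem le_add_inner_sub_add_of_inner_gradient_le (hf : ∀ z, HasGradientAt f (G z) z) (c : ℝ)
    (hub : ∀ a b, ⟪G a - G b, a - b⟫ ≤ c * ‖a - b‖ ^ 2) (x y : E) :
    f y ≤ f x + ⟪G x, y - x⟫ + c / 2 * ‖y - x‖ ^ 2 := by
  -- the tangent inequality for the convex function `c/2 ‖·‖² - f`
  have hh : ∀ z, HasGradientAt (fun w => c / 2 * ‖w‖ ^ 2 + (-1) * f w) (c • z - G z) z := by
    intro z
    convert ((hasGradientAt_norm_sq z).const_mul (c / 2)).add ((hf z).const_mul (-1)) using 1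
    module
  have hmono : ∀ a b, 0 ≤ ⟪(c • a - G a) - (c • b - G b), a - b⟫ := by
    intro a b
    have := hub a b
    rw [show (c • a - G a) - (c • b - G b) = c • (a - b) - (G a - G b) by module,
      inner_sub_left, real_inner_smul_left, real_inner_self_eq_norm_sq]
    linarith
  have htan := add_inner_sub_le_of_monotone_gradient hh hmono x y
  have hsq : ‖y - x‖ ^ 2 = ‖y‖ ^ 2 - 2 * ⟪x, y⟫ + ‖x‖ ^ 2 := by
    rw [norm_sub_sq_real, real_inner_comm]
  simp only [inner_sub_left, inner_sub_right, real_inner_smul_left, real_inner_self_eq_norm_sq]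
    at htan
  rw [hsq, inner_sub_right]
  linarith

theorem norm_sq_sub_le_mul_inner_of_inner_gradient_le (hf : ∀ z, HasGradientAt f (G z) z)
    {c : ℝ} (hc : 0 < c) (hmono : ∀ a b, 0 ≤ ⟪G a - G b, a - b⟫)
    (hub : ∀ a b, ⟪G a - G b, a - b⟫ ≤ c * ‖a - b‖ ^ 2) (x y : E) :
    ‖G x - G y‖ ^ 2 ≤ c * ⟪G x - G y, x - y⟫ := by
  -- compare `f` at `z = y - c⁻¹ (G y - G x)` with its tangent at `x` and its upper model at `y`
  have hgap : ∀ x y, f x + ⟪G x, y - x⟫ + (2 * c)⁻¹ * ‖G y - G x‖ ^ 2 ≤ f y := by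
    intro x y
    set w := G y - G x
    have hlow := add_inner_sub_le_of_monotone_gradient hf hmono x (y - c⁻¹ • w)
    have hup := le_add_inner_sub_add_of_inner_gradient_le hf c hub y (y - c⁻¹ • w)
    rw [show y - c⁻¹ • w - x = (y - x) - c⁻¹ • w by abel, inner_sub_right,
      real_inner_smul_right] at hlow
    rw [show y - c⁻¹ • w - y = -(c⁻¹ • w) by abel, inner_neg_right, real_inner_smul_right,
      norm_neg, norm_smul, mul_pow, Real.norm_eq_abs, sq_abs] at hup
    have hw : c⁻¹ * ⟪G y, w⟫ - c⁻¹ * ⟪G x, w⟫ = c⁻¹ * ‖w‖ ^ 2 := by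
      rw [← mul_sub, ← inner_sub_left, real_inner_self_eq_norm_sq]
    have hcoef : c / 2 * (c⁻¹ ^ 2 * ‖w‖ ^ 2) = c⁻¹ * ‖w‖ ^ 2 - (2 * c)⁻¹ * ‖w‖ ^ 2 := by
      field_simp
      ring
    linarith
  have hxy := hgap x y
  have hyx := hgap y x
  rw [norm_sub_rev] at hxy
  have hsum : ⟪G x, y - x⟫ + ⟪G y, x - y⟫ = -⟪G x - G y, x - y⟫ := by
    rw [inner_sub_left, ← neg_sub x y, inner_neg_right]
    ring
  have h := add_le_add hxy hyx
  rw [show (2 * c)⁻¹ = c⁻¹ / 2 by ring] at h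
  have : c⁻¹ * ‖G x - G y‖ ^ 2 ≤ ⟪G x - G y, x - y⟫ := by linarith
  rwa [inv_mul_le_iff₀ hc] at this

theorem norm_sq_sub_add_mul_norm_sq_le_inner (hf : ∀ z, HasGradientAt f (G z) z) {μ L : ℝ}
    (hμ : 0 ≤ μ) (hμL : μ ≤ L) (hsc : ∀ a b, μ * ‖a - b‖ ^ 2 ≤ ⟪G a - G b, a - b⟫)
    (hlip : ∀ a b, ‖G a - G b‖ ≤ L * ‖a - b‖) (x y : E) :
    ‖G x - G y‖ ^ 2 + μ * L * ‖x - y‖ ^ 2 ≤ (μ + L) * ⟪G x - G y, x - y⟫ := by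
  have hinner_le : ∀ a b, ⟪G a - G b, a - b⟫ ≤ L * ‖a - b‖ ^ 2 := fun a b =>
    (real_inner_le_norm _ _).trans (by nlinarith [hlip a b, norm_nonneg (a - b)])
  have hexpand : ∀ a b,
      ⟪(G a - G b) - μ • (a - b), a - b⟫ = ⟪G a - G b, a - b⟫ - μ * ‖a - b‖ ^ 2 := fun a b => by
    rw [inner_sub_left, real_inner_smul_left, real_inner_self_eq_norm_sq]
  -- cocoercivity of the gradient `G - μ • id` of the convex function `f - μ/2 ‖·‖²`
  have hshift : ‖(G x - G y) - μ • (x - y)‖ ^ 2 ≤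
      (L - μ) * (⟪G x - G y, x - y⟫ - μ * ‖x - y‖ ^ 2) := by
    rcases hμL.lt_or_eq with hlt | rfl
    · have hh : ∀ z, HasGradientAt (fun w => f w + (-μ / 2) * ‖w‖ ^ 2) (G z - μ • z) z := by
        intro z
        convert (hf z).add ((hasGradientAt_norm_sq z).const_mul (-μ / 2)) using 1
        module
      have hdiff : ∀ a b, (G a - μ • a) - (G b - μ • b) = (G a - G b) - μ • (a - b) := by
        intro a b; module
      have hco := norm_sq_sub_le_mul_inner_of_inner_gradient_le hh (sub_pos.2 hlt)
        (fun a b => by rw [hdiff, hexpand]; linarith [hsc a b])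
        (fun a b => by rw [hdiff, hexpand]; linarith [hinner_le a b]) x y
      rwa [hdiff, hexpand] at hco
    · rw [sub_self, zero_mul, norm_sub_smul_sq]
      nlinarith [hlip x y, hsc x y, norm_nonneg (G x - G y), norm_nonneg (x - y)]
  rw [norm_sub_smul_sq] at hshift
  linarith

end Gradient

theorem integral_norm_sub_sq_eq {E : Type*} [NormedAddCommGroup E] [InnerProductSpace ℝ E]
    [CompleteSpace E] {Ω : Type*} [MeasurableSpace Ω] {P : Measure Ω} [IsProbabilityMeasure P]
    {Y : Ω → E} (hY : MemLp Y 2 P) (a : E) :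
    ∫ ω, ‖a - Y ω‖ ^ 2 ∂P = ‖a - ∫ ω, Y ω ∂P‖ ^ 2 + ∫ ω, ‖Y ω - ∫ ω', Y ω' ∂P‖ ^ 2 ∂P := by
  set m := ∫ ω, Y ω ∂P
  have hB : MemLp (fun ω => Y ω - m) 2 P := hY.sub (memLp_const m)
  have hBint : Integrable (fun ω => Y ω - m) P := hB.integrable one_le_two
  have hBsq : Integrable (fun ω => ‖Y ω - m‖ ^ 2) P :=
    (memLp_two_iff_integrable_sq_norm hB.aestronglyMeasurable).1 hB
  have hcross : ∫ ω, ⟪a - m, Y ω - m⟫ ∂P = 0 := by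
    rw [integral_inner hBint, integral_sub (hY.integrable one_le_two) (integrable_const m)]
    simp [m]
  have hexpand : ∀ ω, ‖a - Y ω‖ ^ 2 = ‖a - m‖ ^ 2 - 2 * ⟪a - m, Y ω - m⟫ + ‖Y ω - m‖ ^ 2 := by
    intro ω
    rw [← norm_sub_sq_real]
    congr 2
    abel
  simp_rw [hexpand]
  rw [integral_add _ hBsq, integral_sub (integrable_const _) ((hBint.const_inner _).const_mul 2),
    integral_const_mul, hcross]
  · simp
  · exact (integrable_const _).sub ((hBint.const_inner _).const_mul 2)

theorem stmt4_general (p n : ℕ) (hn : 1 ≤ n) (μ L σ α : ℝ)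
    (hμ : 0 < μ) (hμL : μ ≤ L) (hα0 : 0 < α) (hα : α < 2 / (μ + L))
    (f : Fin n → EuclideanSpace ℝ (Fin p) → ℝ)
    (hdiff : ∀ i, Differentiable ℝ (f i))
    (hsc : ∀ i, ∀ x x' : EuclideanSpace ℝ (Fin p),
      μ * ‖x - x'‖ ^ 2 ≤ ⟪gradient (f i) x - gradient (f i) x', x - x'⟫)
    (hlip : ∀ i, ∀ x x' : EuclideanSpace ℝ (Fin p),
      ‖gradient (f i) x - gradient (f i) x'‖ ≤ L * ‖x - x'‖)
    (xstar : EuclideanSpace ℝ (Fin p))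
    (hmin : ∀ z, (n : ℝ)⁻¹ * ∑ i, f i xstar ≤ (n : ℝ)⁻¹ * ∑ i, f i z)
    (x : Fin n → EuclideanSpace ℝ (Fin p))
    {Ω : Type*} [MeasurableSpace Ω] (P : Measure Ω) [IsProbabilityMeasure P]
    (ybar : Ω → EuclideanSpace ℝ (Fin p)) (hyL2 : MemLp ybar 2 P)
    (hymean : ∫ ω, ybar ω ∂P = (n : ℝ)⁻¹ • ∑ i, gradient (f i) (x i))
    (hyvar : ∫ ω, ‖ybar ω - (n : ℝ)⁻¹ • ∑ i, gradient (f i) (x i)‖ ^ 2 ∂P ≤ σ ^ 2 / n) :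
    (∫ ω, ‖(n : ℝ)⁻¹ • ∑ i, x i - α • ybar ω - xstar‖ ^ 2 ∂P) ≤
      (1 - α * μ) * ‖(n : ℝ)⁻¹ • ∑ i, x i - xstar‖ ^ 2 +
        (α * L ^ 2 / (μ * n)) * (1 + α * μ) *
          (∑ i, ‖x i - (n : ℝ)⁻¹ • ∑ j, x j‖ ^ 2) +
        α ^ 2 * σ ^ 2 / n := by
  have hn0 : n ≠ 0 := by omega
  have hαμL : α * (μ + L) < 2 := by rwa [lt_div_iff₀ (by linarith)] at hα
  have hαμ : α * μ ≤ 1 := by nlinarith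
  set xbar := (n : ℝ)⁻¹ • ∑ i, x i
  set h := (n : ℝ)⁻¹ • ∑ i, gradient (f i) (x i)
  set Gbar := fun z => (n : ℝ)⁻¹ • ∑ i, gradient (f i) z
  have hgrad : ∀ z, HasGradientAt (fun z => (n : ℝ)⁻¹ * ∑ i, f i z) (Gbar z) z := fun z =>
    (HasGradientAt.sum univ fun i _ => (hdiff i z).hasGradientAt).const_mul _
  have hGsc : ∀ a b, μ * ‖a - b‖ ^ 2 ≤ ⟪Gbar a - Gbar b, a - b⟫ :=
    inner_average_sub_average_ge hn0 hsc
  have hGstar : Gbar xstar = 0 :=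
    IsLocalMin.hasGradientAt_eq_zero (Filter.Eventually.of_forall hmin) (hgrad xstar)
  have hstep : ‖(xbar - xstar) - α • Gbar xbar‖ ^ 2 ≤ (1 - α * μ) ^ 2 * ‖xbar - xstar‖ ^ 2 := by
    have hco := norm_sq_sub_add_mul_norm_sq_le_inner hgrad hμ.le hμL hGsc
      (norm_average_sub_average_le hn0 hlip) xbar xstar
    have hsc' := hGsc xbar xstar
    rw [hGstar, sub_zero] at hco hsc'
    exact norm_sub_smul_sq_le_of_coercive hα0.le hαμL.le hsc' hco
  have hdet : ‖(xbar - xstar) - α • h‖ ^ 2 ≤ (1 - α * μ) * ‖xbar - xstar‖ ^ 2 +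
      α / μ * (1 + α * μ) * (L ^ 2 / n * ∑ i, ‖x i - xbar‖ ^ 2) :=
    norm_sub_smul_sq_le_of_norm_sub_le hα0 hμ hαμ hstep
      (norm_sq_average_sub_average_le hlip xbar x)
  have hsplit : ∫ ω, ‖xbar - α • ybar ω - xstar‖ ^ 2 ∂P =
      ‖(xbar - xstar) - α • h‖ ^ 2 + α ^ 2 * ∫ ω, ‖ybar ω - h‖ ^ 2 ∂P := by
    have hvar := integral_norm_sub_sq_eq (hyL2.const_smul α) (xbar - xstar)
    simp only [Pi.smul_apply, integral_smul, hymean, ← smul_sub, norm_smul, mul_pow,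
      Real.norm_eq_abs, sq_abs, integral_const_mul] at hvar
    rw [← hvar]
    congr 1 with ω
    abel_nf
  rw [hsplit]
  have hvar : α ^ 2 * ∫ ω, ‖ybar ω - h‖ ^ 2 ∂P ≤ α ^ 2 * σ ^ 2 / n := by
    rw [mul_div_assoc]
    exact mul_le_mul_of_nonneg_left hyvar (sq_nonneg α)
  have hcoef : α / μ * (1 + α * μ) * (L ^ 2 / n * ∑ i, ‖x i - xbar‖ ^ 2) =
      α * L ^ 2 / (μ * n) * (1 + α * μ) * ∑ i, ‖x i - xbar‖ ^ 2 := by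
    field_simp
  linarith

theorem stmt4 (p n : ℕ) (hp : 1 ≤ p) (hn : 1 ≤ n) (μ L σ α : ℝ)
    (hμ : 0 < μ) (hμL : μ ≤ L) (hσ : 0 < σ) (hα0 : 0 < α) (hα : α < 2 / (μ + L))
    (f : Fin n → EuclideanSpace ℝ (Fin p) → ℝ)
    (hdiff : ∀ i, Differentiable ℝ (f i))
    (hsc : ∀ i, ∀ x x' : EuclideanSpace ℝ (Fin p),
      μ * ‖x - x'‖ ^ 2 ≤ ⟪gradient (f i) x - gradient (f i) x', x - x'⟫)
    (hlip : ∀ i, ∀ x x' : EuclideanSpace ℝ (Fin p),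
      ‖gradient (f i) x - gradient (f i) x'‖ ≤ L * ‖x - x'‖)
    (xstar : EuclideanSpace ℝ (Fin p))
    (hmin : ∀ z, (n : ℝ)⁻¹ * ∑ i, f i xstar ≤ (n : ℝ)⁻¹ * ∑ i, f i z)
    (x : Fin n → EuclideanSpace ℝ (Fin p))
    {Ω : Type*} [MeasurableSpace Ω] (P : Measure Ω) [IsProbabilityMeasure P]
    (ybar : Ω → EuclideanSpace ℝ (Fin p)) (hyL2 : MemLp ybar 2 P)
    (hymean : ∫ ω, ybar ω ∂P = (n : ℝ)⁻¹ • ∑ i, gradient (f i) (x i))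
    (hyvar : ∫ ω, ‖ybar ω - (n : ℝ)⁻¹ • ∑ i, gradient (f i) (x i)‖ ^ 2 ∂P ≤ σ ^ 2 / n) :
    (∫ ω, ‖(n : ℝ)⁻¹ • ∑ i, x i - α • ybar ω - xstar‖ ^ 2 ∂P) ≤
      (1 - α * μ) * ‖(n : ℝ)⁻¹ • ∑ i, x i - xstar‖ ^ 2 +
        (α * L ^ 2 / (μ * n)) * (1 + α * μ) *
          (∑ i, ‖x i - (n : ℝ)⁻¹ • ∑ j, x j‖ ^ 2) +
        α ^ 2 * σ ^ 2 / n :=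
  stmt4_general p n hn μ L σ α hμ hμL hα0 hα f hdiff hsc hlip xstar hmin x P ybar hyL2 hymean hyvar
end

section
/- Let S = [s_{ij}] ∈ ℝ^{3×3} be a nonnegative matrix that is irreducible (for every pair of indices i, j there exists k ≥ 1 with (S^k)_{ij} > 0), and let λ* > 0 satisfy s_{ii} < λ* for i = 1, 2, 3. Then the spectral radius ρ(S) (the maximum modulus of the complex eigenvalues of S) satisfies ρ(S) < λ* if and only if det(λ* I − S) > 0. -/
/-!
If every complex root of `P(t) = det (t • 1 - S)` has modulus `< λ`, the monic real polynomial
`P` has no root in `[λ, ∞)`, hence `P(λ) > 0`.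

Conversely, let `S x = μ x` with `x ≠ 0` and `|μ| ≥ λ`. The triangle inequality gives, for
`y = |x|`, `λ y ≤ |μ| y ≤ S y`, i.e. `(λ • 1 - S) y ≤ 0` with `0 ≤ y ≠ 0`. The matrix
`A = λ • 1 - S` has nonpositive off-diagonal entries, positive diagonal and `det A > 0`; for a
`3 × 3` matrix this forces its principal `2 × 2` minors to be positive, hence `adj A ≥ 0`
entrywise, and then `det A • y = adj A (A y) ≤ 0` contradicts `det A > 0`.
-/

/-- The spectral radius of a real square matrix: the maximum modulus of its complex
eigenvalues (i.e. of the complex roots of its characteristic polynomial). -/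
noncomputable def specRad {d : ℕ} (A : Matrix (Fin d) (Fin d) ℝ) : ℝ :=
  sSup {r : ℝ | ∃ z : ℂ, (A.map Complex.ofReal).charpoly.IsRoot z ∧ r = ‖z‖}

open Matrix Polynomial

lemma Polynomial.sSup_norm_roots_lt_iff {p : ℂ[X]} (hp : 0 < p.degree) (c : ℝ) :
    sSup {r : ℝ | ∃ z : ℂ, p.IsRoot z ∧ r = ‖z‖} < c ↔ ∀ z : ℂ, p.IsRoot z → ‖z‖ < c := by
  have hfin : {r : ℝ | ∃ z : ℂ, p.IsRoot z ∧ r = ‖z‖}.Finite := by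
    convert (finite_setOfPred_isRoot (ne_zero_of_degree_gt hp)).image (‖·‖) using 1
    ext r
    simp only [Set.mem_ofPred_eq, Set.mem_image, eq_comm]
  obtain ⟨z, hz⟩ := Complex.exists_root hp
  rw [hfin.csSup_lt_iff ⟨_, z, hz, rfl⟩]
  exact ⟨fun h z hz => h _ ⟨z, hz, rfl⟩, fun h _ ⟨z, hz, hr⟩ => hr ▸ h z hz⟩

lemma specRad_lt_iff {d : ℕ} [NeZero d] (A : Matrix (Fin d) (Fin d) ℝ) (c : ℝ) :
    specRad A < c ↔ ∀ z : ℂ, (A.map Complex.ofReal).charpoly.IsRoot z → ‖z‖ < c :=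
  sSup_norm_roots_lt_iff (by simp [charpoly_degree_eq_dim, NeZero.pos d]) c

lemma Polynomial.eval_pos_of_monic_of_not_isRoot_ge {p : ℝ[X]} (hp : p.Monic) {a : ℝ}
    (h : ∀ t, a ≤ t → ¬ p.IsRoot t) : 0 < p.eval a := by
  rcases Nat.eq_zero_or_pos p.natDegree with hdeg | hdeg
  · simp [(Monic.natDegree_eq_zero hp).mp hdeg]
  have hlim := tendsto_atTop_of_leadingCoeff_nonneg p (natDegree_pos_iff_degree_pos.mp hdeg)
    (by simp [Monic.leadingCoeff hp])
  obtain ⟨b, hb, hab⟩ := ((hlim.eventually_gt_atTop 0).and (Filter.eventually_ge_atTop a)).exists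
  by_contra! ha
  obtain ⟨t, ht, hroot⟩ := intermediate_value_Icc hab p.continuous.continuousOn ⟨ha, hb.le⟩
  exact h t ht.1 hroot

lemma Matrix.exists_mulVec_eq_smul_of_isRoot_charpoly {n K : Type*} [Fintype n] [DecidableEq n]
    [Field K] {A : Matrix n n K} {μ : K} (h : A.charpoly.IsRoot μ) :
    ∃ x ≠ 0, A *ᵥ x = μ • x := by
  rw [IsRoot, eval_charpoly, ← exists_mulVec_eq_zero_iff] at h
  obtain ⟨x, hx0, hx⟩ := h
  refine ⟨x, hx0, ?_⟩
  rw [sub_mulVec, sub_eq_zero, scalar_apply] at hx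
  ext i
  simp [← hx, mulVec_diagonal]

lemma Matrix.norm_smul_le_mulVec_norm {n : Type*} [Fintype n] {A : Matrix n n ℝ}
    (hA : ∀ i j, 0 ≤ A i j) {μ : ℂ} {x : n → ℂ} (hx : A.map Complex.ofReal *ᵥ x = μ • x) :
    ‖μ‖ • (fun i => ‖x i‖) ≤ A *ᵥ fun i => ‖x i‖ := by
  intro i
  calc ‖μ‖ * ‖x i‖ = ‖∑ j, (A i j : ℂ) * x j‖ := by
        rw [← norm_mul, ← smul_eq_mul, ← Pi.smul_apply, ← hx]; rfl
    _ ≤ ∑ j, A i j * ‖x j‖ := by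
        refine (norm_sum_le _ _).trans (Finset.sum_le_sum fun j _ => ?_)
        rw [norm_mul, Complex.norm_of_nonneg (hA i j)]

lemma Matrix.det_nonpos_of_adjugate_nonneg {n : Type*} [Fintype n] [DecidableEq n]
    {A : Matrix n n ℝ} (hadj : ∀ i j, 0 ≤ A.adjugate i j) {y : n → ℝ} (hy : 0 ≤ y)
    (hy0 : y ≠ 0) (hAy : A *ᵥ y ≤ 0) : A.det ≤ 0 := by
  obtain ⟨i, hi⟩ := Function.ne_iff.mp hy0
  have hyi : 0 < y i := (hy i).lt_of_ne' hi
  have hdet : A.det * y i = (A.adjugate *ᵥ (A *ᵥ y)) i := by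
    rw [mulVec_mulVec, adjugate_mul, smul_mulVec, one_mulVec]
    rfl
  have : (A.adjugate *ᵥ (A *ᵥ y)) i ≤ 0 :=
    Finset.sum_nonpos fun j _ => mul_nonpos_of_nonneg_of_nonpos (hadj i j) (hAy j)
  exact nonpos_of_mul_nonpos_left (hdet ▸ this) hyi

lemma Matrix.adjugate_nonneg_of_det_pos_fin_three {A : Matrix (Fin 3) (Fin 3) ℝ}
    (hoff : ∀ i j, i ≠ j → A i j ≤ 0) (hdiag : ∀ i, 0 < A i i) (hdet : 0 < A.det) :
    ∀ i j, 0 ≤ A.adjugate i j := by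
  have h01 := hoff 0 1 (by decide); have h02 := hoff 0 2 (by decide)
  have h10 := hoff 1 0 (by decide); have h12 := hoff 1 2 (by decide)
  have h20 := hoff 2 0 (by decide); have h21 := hoff 2 1 (by decide)
  have h0 := hdiag 0; have h1 := hdiag 1; have h2 := hdiag 2
  rw [det_fin_three] at hdet
  -- In the expansion of `det A`, every term other than `A i i` times the complementary
  -- principal minor is `≤ 0`.
  have p01 := mul_nonneg_of_nonpos_of_nonpos h01 h10
  have p02 := mul_nonneg_of_nonpos_of_nonpos h02 h20
  have p12 := mul_nonneg_of_nonpos_of_nonpos h12 h21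
  have p012 := mul_nonneg_of_nonpos_of_nonpos h01 h12
  have p021 := mul_nonneg_of_nonpos_of_nonpos h02 h21
  have m0 : 0 < A 1 1 * A 2 2 - A 1 2 * A 2 1 := by nlinarith
  have m1 : 0 < A 0 0 * A 2 2 - A 0 2 * A 2 0 := by nlinarith
  have m2 : 0 < A 0 0 * A 1 1 - A 0 1 * A 1 0 := by nlinarith
  rw [adjugate_fin_three]
  intro i j
  fin_cases i <;> fin_cases j <;>
    simp only [Fin.isValue, Fin.zero_eta, Fin.mk_one, Fin.reduceFinMk, of_apply, cons_val',
      cons_val, cons_val_zero, cons_val_one, cons_val_fin_one] <;>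
    nlinarith

lemma Matrix.not_smul_le_mulVec_of_det_pos {S : Matrix (Fin 3) (Fin 3) ℝ} (hS : ∀ i j, 0 ≤ S i j)
    {lam : ℝ} (hdiag : ∀ i, S i i < lam)
    (hdet : 0 < (lam • (1 : Matrix (Fin 3) (Fin 3) ℝ) - S).det)
    {y : Fin 3 → ℝ} (hy : 0 ≤ y) (hy0 : y ≠ 0) : ¬ lam • y ≤ S *ᵥ y := by
  intro hSy
  have hadj := adjugate_nonneg_of_det_pos_fin_three
    (fun i j hij => by simpa [one_apply_ne hij] using hS i j)
    (fun i => by simpa using hdiag i) hdet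
  have hAy : (lam • (1 : Matrix (Fin 3) (Fin 3) ℝ) - S) *ᵥ y ≤ 0 := by
    rw [sub_mulVec, smul_mulVec, one_mulVec]
    exact sub_nonpos.mpr hSy
  exact (det_nonpos_of_adjugate_nonneg hadj hy hy0 hAy).not_gt hdet

theorem stmt7_general (S : Matrix (Fin 3) (Fin 3) ℝ)
    (hSnonneg : ∀ i j, 0 ≤ S i j)
    (lam : ℝ)
    (hdiag : ∀ i, S i i < lam) :
    specRad S < lam ↔ 0 < (lam • (1 : Matrix (Fin 3) (Fin 3) ℝ) - S).det := by
  have hchar : (lam • (1 : Matrix (Fin 3) (Fin 3) ℝ) - S).det = S.charpoly.eval lam := by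
    rw [eval_charpoly, scalar_apply, smul_one_eq_diagonal]
  rw [specRad_lt_iff, hchar]
  constructor
  · intro h
    refine eval_pos_of_monic_of_not_isRoot_ge S.charpoly_monic fun t ht hroot => ?_
    have ht_lt := h t (by
      rw [show S.map Complex.ofReal = S.map Complex.ofRealHom from rfl, charpoly_map]
      exact hroot.map)
    rw [Complex.norm_real, Real.norm_eq_abs] at ht_lt
    exact (le_abs_self t).not_gt (ht_lt.trans_le ht)
  · intro hdet z hz
    by_contra! hge
    obtain ⟨x, hx0, hx⟩ := exists_mulVec_eq_smul_of_isRoot_charpoly hz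
    have hy0 : (fun i => ‖x i‖) ≠ 0 := by simpa [funext_iff] using hx0
    refine not_smul_le_mulVec_of_det_pos hSnonneg hdiag (hchar ▸ hdet)
      (fun i => norm_nonneg (x i)) hy0 fun i => ?_
    exact (mul_le_mul_of_nonneg_right hge (norm_nonneg _)).trans
      (norm_smul_le_mulVec_norm hSnonneg hx i)

theorem stmt7 (S : Matrix (Fin 3) (Fin 3) ℝ)
    (hSnonneg : ∀ i j, 0 ≤ S i j)
    (hirr : ∀ i j, ∃ k : ℕ, 1 ≤ k ∧ 0 < (S ^ k) i j)
    (lam : ℝ) (hlam : 0 < lam)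
    (hdiag : ∀ i, S i i < lam) :
    specRad S < lam ↔ 0 < (lam • (1 : Matrix (Fin 3) (Fin 3) ℝ) - S).det :=
  stmt7_general S hSnonneg lam hdiag
end

section
/- Let n ≥ 1, 0 < μ ≤ L, Γ > 1, let W ∈ ℝ^{n×n} be nonnegative doubly stochastic and let ρ_w ∈ (0,1) be the operator 2-norm of W − (1/n)𝟙𝟙ᵀ. Suppose 0 < α ≤ min{ (1−ρ_w²)/(12ρ_w L), (1−ρ_w²)²/(2√Γ L · max{6ρ_w‖W−I‖_F, 1−ρ_w²}), ((1−ρ_w²)/(3ρ_w^{2/3}L)) · (μ²(Γ−1)/(L²Γ(Γ+1)))^{1/3} }. Then β := (1−ρ_w²)/(2ρ_w²) − 4αL − 2α²L² > 0 and the spectral radius of the matrix A satisfies ρ(A) < 1, where A is the 3×3 matrix A = [[1−αμ, (αL²/(μn))(1+αμ), 0], [0, (1+ρ_w²)/2, α²(1+ρ_w²)ρ_w²/(1−ρ_w²)], [2αnL³, (1/β + 2)‖W−I‖_F²L² + 3αL³, (1+ρ_w²)/2]]. -/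
/-!
A nonnegative matrix that strictly shrinks some positive vector `v` has spectral radius `< 1`
(Collatz–Wielandt). For the 3 × 3 matrix take `v = (1, x, x y)` with `x = μ² n / (4 L²)`: the
first row then only needs `α μ < 3`, and a `y` serving the last two rows exists as soon as
`a₂₃ (a₃₁ + a₃₂ x) < ((1 - ρ²) / 2)² x`. The stepsize bounds give `β ≥ (1 - ρ²) / (12 ρ²)` and
turn this condition into `88 (Γ - 1) + 18 (Γ + 1) < 27 Γ (Γ + 1)`, which holds for every `Γ`
because `27 Γ² - 79 Γ + 70` has negative discriminant.
-/

open Matrix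

namespace Matrix

variable {ι : Type*} [Fintype ι] [DecidableEq ι]

theorem exists_mulVec_eq_smul_of_isRoot_charpoly_s8 {K : Type*} [Field K] {B : Matrix ι ι K} {z : K}
    (hz : B.charpoly.IsRoot z) : ∃ x ≠ 0, B *ᵥ x = z • x := by
  rw [← charpoly_toLin', ← Module.End.hasEigenvalue_iff_isRoot_charpoly] at hz
  obtain ⟨x, hx⟩ := hz.exists_hasEigenvector
  exact ⟨x, hx.2, by simpa using hx.apply_eq_smul⟩

/-- Collatz–Wielandt bound: compare an eigenvector `x` with `v` at an index maximising
`‖x i‖ / v i`. -/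
theorem norm_le_of_isRoot_charpoly_of_mulVec_le {A : Matrix ι ι ℝ} (hA : ∀ i j, 0 ≤ A i j)
    {v : ι → ℝ} (hv : ∀ i, 0 < v i) {c : ℝ} (hAv : ∀ i, (A *ᵥ v) i ≤ c * v i) {z : ℂ}
    (hz : (A.map Complex.ofReal).charpoly.IsRoot z) : ‖z‖ ≤ c := by
  obtain ⟨x, hx0, hx⟩ := exists_mulVec_eq_smul_of_isRoot_charpoly_s8 hz
  obtain ⟨k, hk⟩ := Function.ne_iff.mp hx0
  obtain ⟨i, -, hi⟩ :=
    Finset.exists_max_image Finset.univ (fun j => ‖x j‖ / v j) ⟨k, Finset.mem_univ k⟩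
  set m := ‖x i‖ / v i
  have hxm (j : ι) : ‖x j‖ ≤ m * v j := (div_le_iff₀ (hv j)).mp (hi j (Finset.mem_univ j))
  have hm : 0 < m := (div_pos (norm_pos_iff.mpr hk) (hv k)).trans_le (hi k (Finset.mem_univ k))
  have hxi : ‖x i‖ = m * v i := by simp [m, (hv i).ne']
  have key : ‖z‖ * (m * v i) ≤ c * (m * v i) :=
    calc ‖z‖ * (m * v i) = ‖∑ j, (A i j : ℂ) * x j‖ := by
          rw [← hxi, ← norm_mul, ← smul_eq_mul, ← Pi.smul_apply z x i, ← hx]; rfl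
      _ ≤ ∑ j, A i j * ‖x j‖ := by
          refine (norm_sum_le _ _).trans_eq (Finset.sum_congr rfl fun j _ => ?_)
          rw [norm_mul, Complex.norm_real, Real.norm_of_nonneg (hA i j)]
      _ ≤ ∑ j, A i j * (m * v j) := by gcongr with j; exacts [hA i j, hxm j]
      _ = m * (A *ᵥ v) i := by
          simp only [mulVec, dotProduct, Finset.mul_sum]
          exact Finset.sum_congr rfl fun j _ => by ring
      _ ≤ m * (c * v i) := by gcongr; exact hAv i
      _ = c * (m * v i) := by ring
  exact le_of_mul_le_mul_right key (mul_pos hm (hv i))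

end Matrix

theorem specRad_le_of_mulVec_le {d : ℕ} {A : Matrix (Fin d) (Fin d) ℝ} (hA : ∀ i j, 0 ≤ A i j)
    {v : Fin d → ℝ} (hv : ∀ i, 0 < v i) {c : ℝ} (hc : 0 ≤ c) (hAv : ∀ i, (A *ᵥ v) i ≤ c * v i) :
    specRad A ≤ c :=
  Real.sSup_le (fun _ ⟨_, hz, hr⟩ => hr ▸ norm_le_of_isRoot_charpoly_of_mulVec_le hA hv hAv hz) hc

theorem specRad_lt_one_of_mulVec_lt {d : ℕ} [NeZero d] {A : Matrix (Fin d) (Fin d) ℝ}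
    (hA : ∀ i j, 0 ≤ A i j) {v : Fin d → ℝ} (hv : ∀ i, 0 < v i) (hAv : ∀ i, (A *ᵥ v) i < v i) :
    specRad A < 1 := by
  obtain ⟨i, -, hi⟩ := Finset.exists_max_image Finset.univ (fun j => (A *ᵥ v) j / v j)
    Finset.univ_nonempty
  have hAv_nonneg : 0 ≤ (A *ᵥ v) i :=
    Finset.sum_nonneg (s := Finset.univ) fun j _ => mul_nonneg (hA i j) (hv j).le
  refine (specRad_le_of_mulVec_le hA hv (div_nonneg hAv_nonneg (hv i).le)
    fun j => (div_le_iff₀ (hv j)).mp (hi j (Finset.mem_univ j))).trans_lt ?_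
  exact (div_lt_one (hv i)).mpr (hAv i)

theorem specRad_fin_three_lt_one {a b c d e f g x : ℝ} (ha : 0 ≤ a) (hb : 0 ≤ b) (hc : 0 ≤ c)
    (hd : 0 < d) (he : 0 ≤ e) (hf : 0 ≤ f) (hg : 0 ≤ g) (hg1 : g < 1) (hx : 0 < x)
    (h₁ : a + b * x < 1) (hdet : d * (e + f * x) < (1 - c) * (1 - g) * x) :
    specRad !![a, b, 0; 0, c, d; e, f, g] < 1 := by
  have hgx : 0 < (1 - g) * x := by nlinarith
  obtain ⟨y, hy₁, hy₂⟩ : ∃ y, (e + f * x) / ((1 - g) * x) < y ∧ y < (1 - c) / d :=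
    exists_between ((div_lt_div_iff₀ hgx hd).mpr (by linarith))
  have hy : 0 < y := (div_nonneg (by positivity) hgx.le).trans_lt hy₁
  rw [div_lt_iff₀ hgx] at hy₁
  rw [lt_div_iff₀ hd] at hy₂
  refine specRad_lt_one_of_mulVec_lt (v := ![1, x, x * y]) ?_ ?_ ?_
  · intro i j
    fin_cases i <;> fin_cases j <;> simp [*, hd.le]
  · intro i
    fin_cases i <;> simp [*]
  · intro i
    fin_cases i <;> simp [mulVec, dotProduct, Fin.sum_univ_three] <;> nlinarith

section StepsizeBounds

variable {μ L Γ ρ K α u : ℝ}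

theorem two_mul_mul_le_of_le_div_max (hL : 0 < L) (hΓ : 1 ≤ Γ) (hα : 0 ≤ α) (hu : 0 < u)
    (h : α ≤ u ^ 2 / (2 * √Γ * L * max K u)) : 2 * α * L ≤ u := by
  have hΓ' : 1 ≤ √Γ := Real.one_le_sqrt.mpr hΓ
  rw [le_div_iff₀ (by positivity)] at h
  have : 2 * α * L * u ≤ α * (2 * √Γ * L * max K u) :=
    calc 2 * α * L * u = α * (2 * 1 * L * u) := by ring
      _ ≤ α * (2 * √Γ * L * max K u) := by gcongr; exact le_max_right K u
  nlinarith

theorem sq_mul_le_of_le_div_max (hL : 0 < L) (hΓ : 0 < Γ) (hα : 0 ≤ α) (hK : 0 ≤ K)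
    (hu : 0 < u) (h : α ≤ u ^ 2 / (2 * √Γ * L * max K u)) :
    4 * Γ * (α * L * K) ^ 2 ≤ u ^ 4 := by
  have : 0 < max K u := hu.trans_le (le_max_right K u)
  rw [le_div_iff₀ (by positivity)] at h
  have h' : 2 * √Γ * (α * L * K) ≤ u ^ 2 :=
    calc 2 * √Γ * (α * L * K) = α * (2 * √Γ * L * K) := by ring
      _ ≤ α * (2 * √Γ * L * max K u) := by gcongr; exact le_max_left K u
      _ ≤ u ^ 2 := h
  calc 4 * Γ * (α * L * K) ^ 2 = (2 * √Γ * (α * L * K)) ^ 2 := by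
        linear_combination (-4 * (α * L * K) ^ 2) * Real.sq_sqrt hΓ.le
    _ ≤ (u ^ 2) ^ 2 := by gcongr
    _ = u ^ 4 := by ring

theorem pow_three_le_of_le_mul_rpow {b X : ℝ} (hα : 0 ≤ α) (hX : 0 ≤ X)
    (h : α ≤ b * X ^ ((1 : ℝ) / 3)) : α ^ 3 ≤ b ^ 3 * X :=
  calc α ^ 3 ≤ (b * X ^ ((1 : ℝ) / 3)) ^ 3 := by gcongr
    _ = b ^ 3 * X := by rw [mul_pow, ← Real.rpow_natCast (X ^ _), ← Real.rpow_mul hX]; norm_num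

theorem cube_le_of_le_mul_rpow (hρ : 0 < ρ) (hL : 0 < L) (hα : 0 ≤ α) (hΓ : 1 < Γ)
    (h : α ≤ u / (3 * ρ ^ ((2 : ℝ) / 3) * L) *
      (μ ^ 2 / L ^ 2 * ((Γ - 1) / (Γ * (Γ + 1)))) ^ ((1 : ℝ) / 3)) :
    27 * α ^ 3 * ρ ^ 2 * L ^ 5 * (Γ * (Γ + 1)) ≤ u ^ 3 * μ ^ 2 * (Γ - 1) := by
  have hΓ0 : 0 < Γ := by linarith
  have hρ3 : (ρ ^ ((2 : ℝ) / 3)) ^ 3 = ρ ^ 2 := by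
    rw [← Real.rpow_natCast, ← Real.rpow_mul hρ.le]; norm_num
  have h3 := pow_three_le_of_le_mul_rpow hα (by positivity) h
  rw [div_pow, mul_pow, mul_pow, hρ3] at h3
  field_simp at h3
  linarith

theorem le_beta (hρ0 : 0 < ρ) (hρ1 : ρ < 1) (hα : 0 ≤ α) (hL : 0 < L)
    (h₁ : α ≤ (1 - ρ ^ 2) / (12 * ρ * L)) (h₂ : 2 * α * L ≤ 1) :
    (1 - ρ ^ 2) / (12 * ρ ^ 2) ≤ (1 - ρ ^ 2) / (2 * ρ ^ 2) - 4 * α * L - 2 * α ^ 2 * L ^ 2 := by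
  rw [le_div_iff₀ (by positivity)] at h₁
  have hαL : 0 ≤ α * L := mul_nonneg hα hL.le
  have h₃ : 12 * α * L * ρ ^ 2 ≤ 1 - ρ ^ 2 := by
    nlinarith [mul_le_mul_of_nonneg_left (by nlinarith : ρ ^ 2 ≤ ρ) hαL]
  have h₄ : 24 * α ^ 2 * L ^ 2 * ρ ^ 2 ≤ 1 - ρ ^ 2 := by
    nlinarith [mul_le_mul_of_nonneg_left h₂ (by positivity : 0 ≤ 12 * α * L * ρ ^ 2)]
  rw [div_le_iff₀ (by positivity)]
  field_simp
  nlinarith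

theorem det_condition_of_stepsize_bounds (hρ0 : 0 < ρ) (hρ1 : ρ < 1) (hμ : 0 < μ) (hμL : μ ≤ L)
    (hΓ : 1 < Γ) (hα : 0 < α) {β : ℝ} (hβ : (1 - ρ ^ 2) / (12 * ρ ^ 2) ≤ β)
    (hK : 144 * Γ * (α * L * ρ * K) ^ 2 ≤ (1 - ρ ^ 2) ^ 4)
    (hC : 27 * α ^ 3 * ρ ^ 2 * L ^ 5 * (Γ * (Γ + 1)) ≤ (1 - ρ ^ 2) ^ 3 * μ ^ 2 * (Γ - 1)) :
    4 * (α ^ 2 * ((1 + ρ ^ 2) * ρ ^ 2 / (1 - ρ ^ 2))) *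
        (8 * α * L ^ 5 / μ ^ 2 + (1 / β + 2) * K ^ 2 * L ^ 2 + 3 * α * L ^ 3) <
      (1 - ρ ^ 2) ^ 2 := by
  set u := 1 - ρ ^ 2
  have hu : 0 < u := by nlinarith
  have hL : 0 < L := hμ.trans_le hμL
  have hβ0 : 0 < β := (by positivity : 0 < u / (12 * ρ ^ 2)).trans_le hβ
  have hβinv : 1 / β + 2 ≤ 12 / u := by
    have : 1 / β ≤ 12 * ρ ^ 2 / u := by
      rw [one_div_le hβ0 (by positivity), one_div_div]; exact hβ
    calc 1 / β + 2 ≤ 12 * ρ ^ 2 / u + 2 := by linarith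
      _ ≤ 12 / u := by rw [div_add' _ _ _ hu.ne', div_le_div_iff_of_pos_right hu]; linarith
  have hL3 : α * L ^ 3 ≤ α * L ^ 5 / μ ^ 2 := by
    rw [le_div_iff₀ (by positivity)]
    have : μ ^ 2 ≤ L ^ 2 := by gcongr
    calc α * L ^ 3 * μ ^ 2 ≤ α * L ^ 3 * L ^ 2 := by gcongr
      _ = α * L ^ 5 := by ring
  have hC' : α ^ 3 * ρ ^ 2 * L ^ 5 / μ ^ 2 ≤ u ^ 3 * (Γ - 1) / (27 * (Γ * (Γ + 1))) := by
    rw [div_le_div_iff₀ (by positivity) (by positivity)]; linarith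
  have hK' : (α * L * ρ * K) ^ 2 ≤ u ^ 4 / (144 * Γ) := by
    rw [le_div_iff₀ (by positivity)]; linarith
  calc 4 * (α ^ 2 * ((1 + ρ ^ 2) * ρ ^ 2 / u)) *
        (8 * α * L ^ 5 / μ ^ 2 + (1 / β + 2) * K ^ 2 * L ^ 2 + 3 * α * L ^ 3)
      ≤ 4 * (2 * α ^ 2 * ρ ^ 2 / u) * (11 * α * L ^ 5 / μ ^ 2 + 12 / u * K ^ 2 * L ^ 2) := by
        refine mul_le_mul ?_ ?_ (by positivity) (by positivity)
        · rw [mul_div_assoc']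
          exact mul_le_mul_of_nonneg_left (div_le_div_of_nonneg_right
            (by nlinarith [mul_pos (mul_pos (pow_pos hα 2) (pow_pos hρ0 2)) hu]) hu.le)
            (by norm_num)
        · have := mul_le_mul_of_nonneg_right hβinv (by positivity : 0 ≤ K ^ 2 * L ^ 2)
          linear_combination 3 * hL3 + this
    _ = 88 / u * (α ^ 3 * ρ ^ 2 * L ^ 5 / μ ^ 2) + 96 / u ^ 2 * (α * L * ρ * K) ^ 2 := by
        field_simp; ring
    _ ≤ 88 / u * (u ^ 3 * (Γ - 1) / (27 * (Γ * (Γ + 1)))) + 96 / u ^ 2 * (u ^ 4 / (144 * Γ)) := by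
        gcongr
    _ = u ^ 2 * ((88 * (Γ - 1) + 18 * (Γ + 1)) / (27 * (Γ * (Γ + 1)))) := by
        field_simp; ring
    _ < u ^ 2 := by
        refine mul_lt_of_lt_one_right (by positivity) ((div_lt_one (by positivity)).mpr ?_)
        nlinarith [sq_nonneg (Γ - 79 / 54)]

end StepsizeBounds

theorem stmt8_general (n : ℕ) (hn : 1 ≤ n) (μ L Γ : ℝ)
    (hμ : 0 < μ) (hμL : μ ≤ L) (hΓ : 1 < Γ)
    (W : Matrix (Fin n) (Fin n) ℝ)
    (ρw : ℝ)
    (hρw0 : 0 < ρw) (hρw1 : ρw < 1)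
    (α : ℝ) (hα0 : 0 < α)
    (hα : α ≤ min (min ((1 - ρw ^ 2) / (12 * ρw * L))
        ((1 - ρw ^ 2) ^ 2 /
          (2 * Real.sqrt Γ * L * max (6 * ρw * frobNorm (W - 1)) (1 - ρw ^ 2))))
        (((1 - ρw ^ 2) / (3 * ρw ^ ((2 : ℝ) / 3) * L)) *
          (μ ^ 2 / L ^ 2 * ((Γ - 1) / (Γ * (Γ + 1)))) ^ ((1 : ℝ) / 3))) :
    0 < (1 - ρw ^ 2) / (2 * ρw ^ 2) - 4 * α * L - 2 * α ^ 2 * L ^ 2 ∧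
      specRad
        !![1 - α * μ, α * L ^ 2 / (μ * n) * (1 + α * μ), 0;
           0, (1 + ρw ^ 2) / 2, α ^ 2 * ((1 + ρw ^ 2) * ρw ^ 2 / (1 - ρw ^ 2));
           2 * α * n * L ^ 3,
             (1 / ((1 - ρw ^ 2) / (2 * ρw ^ 2) - 4 * α * L - 2 * α ^ 2 * L ^ 2) + 2) *
                 frobNorm (W - 1) ^ 2 * L ^ 2 + 3 * α * L ^ 3,
             (1 + ρw ^ 2) / 2] < 1 := by
  have hL : 0 < L := hμ.trans_le hμL
  have hu : 0 < 1 - ρw ^ 2 := by nlinarith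
  set K := frobNorm (W - 1)
  have hK : 0 ≤ K := Real.sqrt_nonneg _
  obtain ⟨⟨hα₁, hα₂⟩, hα₃⟩ := le_min_iff.mp hα |>.imp_left le_min_iff.mp
  have h2αL := two_mul_mul_le_of_le_div_max hL hΓ.le hα0.le hu hα₂
  have hβ := le_beta hρw0 hρw1 hα0.le hL hα₁ (by nlinarith)
  set β := (1 - ρw ^ 2) / (2 * ρw ^ 2) - 4 * α * L - 2 * α ^ 2 * L ^ 2
  have hβ0 : 0 < β := (by positivity : 0 < (1 - ρw ^ 2) / (12 * ρw ^ 2)).trans_le hβ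
  have hKβ := sq_mul_le_of_le_div_max hL (by linarith) hα0.le (by positivity) hu hα₂
  have hdet := det_condition_of_stepsize_bounds (K := K) hρw0 hρw1 hμ hμL hΓ hα0 hβ
    (by linear_combination hKβ) (cube_le_of_le_mul_rpow hρw0 hL hα0.le hΓ hα₃)
  have hαμ : α * μ ≤ 1 / 2 := by nlinarith
  refine ⟨hβ0, specRad_fin_three_lt_one (x := μ ^ 2 * n / (4 * L ^ 2)) (by linarith)
    (by positivity) (by positivity) (mul_pos (by positivity) (div_pos (by positivity) hu))
    (by positivity) (by positivity) (by positivity) (by nlinarith) (by positivity) ?_ ?_⟩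
  · have hrow : α * L ^ 2 / (μ * n) * (1 + α * μ) * (μ ^ 2 * n / (4 * L ^ 2)) =
        α * μ * (1 + α * μ) / 4 := by
      field_simp
    rw [hrow]
    nlinarith [mul_pos hα0 hμ]
  · calc _ = μ ^ 2 * n / (4 * L ^ 2) / 4 *
            (4 * (α ^ 2 * ((1 + ρw ^ 2) * ρw ^ 2 / (1 - ρw ^ 2))) *
              (8 * α * L ^ 5 / μ ^ 2 + (1 / β + 2) * K ^ 2 * L ^ 2 + 3 * α * L ^ 3)) := by
          field_simp
          ring
      _ < μ ^ 2 * n / (4 * L ^ 2) / 4 * (1 - ρw ^ 2) ^ 2 := by gcongr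
      _ = _ := by ring

theorem stmt8 (n : ℕ) (hn : 1 ≤ n) (μ L Γ : ℝ)
    (hμ : 0 < μ) (hμL : μ ≤ L) (hΓ : 1 < Γ)
    (W : Matrix (Fin n) (Fin n) ℝ)
    (hWnonneg : ∀ i j, 0 ≤ W i j)
    (hWrow : W.mulVec (fun _ => (1 : ℝ)) = fun _ => (1 : ℝ))
    (hWcol : Matrix.vecMul (fun _ => (1 : ℝ)) W = fun _ => (1 : ℝ))
    (ρw : ℝ) (hρw : ρw = l2OpNorm (W - (n : ℝ)⁻¹ • Matrix.of (fun _ _ : Fin n => (1 : ℝ))))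
    (hρw0 : 0 < ρw) (hρw1 : ρw < 1)
    (α : ℝ) (hα0 : 0 < α)
    (hα : α ≤ min (min ((1 - ρw ^ 2) / (12 * ρw * L))
        ((1 - ρw ^ 2) ^ 2 /
          (2 * Real.sqrt Γ * L * max (6 * ρw * frobNorm (W - 1)) (1 - ρw ^ 2))))
        (((1 - ρw ^ 2) / (3 * ρw ^ ((2 : ℝ) / 3) * L)) *
          (μ ^ 2 / L ^ 2 * ((Γ - 1) / (Γ * (Γ + 1)))) ^ ((1 : ℝ) / 3))) :
    0 < (1 - ρw ^ 2) / (2 * ρw ^ 2) - 4 * α * L - 2 * α ^ 2 * L ^ 2 ∧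
      specRad
        !![1 - α * μ, α * L ^ 2 / (μ * n) * (1 + α * μ), 0;
           0, (1 + ρw ^ 2) / 2, α ^ 2 * ((1 + ρw ^ 2) * ρw ^ 2 / (1 - ρw ^ 2));
           2 * α * n * L ^ 3,
             (1 / ((1 - ρw ^ 2) / (2 * ρw ^ 2) - 4 * α * L - 2 * α ^ 2 * L ^ 2) + 2) *
                 frobNorm (W - 1) ^ 2 * L ^ 2 + 3 * α * L ^ 3,
             (1 + ρw ^ 2) / 2] < 1 :=
  stmt8_general n hn μ L Γ hμ hμL hΓ W ρw hρw0 hρw1 α hα0 hα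
end

section
/- Let n ≥ 1, 0 < μ ≤ L, Γ > 1, let W ∈ ℝ^{n×n} be nonnegative doubly stochastic and let ρ_w ∈ (0,1) be the operator 2-norm of W − (1/n)𝟙𝟙ᵀ. Suppose 0 < α ≤ min{ (1−ρ_w²)/(12ρ_w L), (1−ρ_w²)²/(2√Γ L · max{6ρ_w‖W−I‖_F, 1−ρ_w²}), ((1−ρ_w²)/(3ρ_w^{2/3}L)) · (μ²(Γ−1)/(L²Γ(Γ+1)))^{1/3} } and additionally α ≤ ((Γ+1)/Γ)·(1−ρ_w²)/(8μ). Let β := (1−ρ_w²)/(2ρ_w²) − 4αL − 2α²L² and let A be the 3×3 matrix A = [[1−αμ, (αL²/(μn))(1+αμ), 0], [0, (1+ρ_w²)/2, α²(1+ρ_w²)ρ_w²/(1−ρ_w²)], [2αnL³, (1/β + 2)‖W−I‖_F²L² + 3αL³, (1+ρ_w²)/2]]. Then the spectral radius of A satisfies ρ(A) ≤ 1 − ((Γ−1)/(Γ+1))·αμ. -/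
/-!
The matrix has the pattern `!![a, b, 0; 0, c, e; f, g, c]`, whose characteristic polynomial is
`(z - a) * ((z - c) ^ 2 - e * g) - b * e * f`. For nonnegative entries, `|z| > λ` and `a, c < λ`,
the triangle inequality gives `|z - a| * |(z - c) ^ 2 - e * g| > (λ - a) * ((λ - c) ^ 2 - e * g)`,
so all roots lie in the disc of radius `λ` once `b * e * f ≤ (λ - a) * ((λ - c) ^ 2 - e * g)`.

For `λ = 1 - θ α μ` with `θ = (Γ - 1) / (Γ + 1)` this splits along the margin
`m = (1 - ρ²)² (Γ - 1) / (9 Γ)` into `e * g ≤ (λ - c) ^ 2 - m` and `b * e * f ≤ (λ - a) * m`.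
The first holds because the first two step-size bounds make each summand of `e * g` small against
`(1 - ρ²)² / Γ` (and keep `β ≥ 11 (1 - ρ²) / (72 ρ²)`), while `θ α μ ≤ (1 - ρ²)(Γ - 1) / (8 Γ)`
leaves `λ - c ≥ (1 - ρ²)(3 + 1 / Γ) / 8`. The second is exactly the cube of the third step-size bound.
-/

open Matrix

section CharpolyFinThree

variable {a b c e f g lam : ℝ}

lemma eval_charpoly_map_ofReal_fin_three (z : ℂ) :
    ((!![a, b, 0; 0, c, e; f, g, c] : Matrix (Fin 3) (Fin 3) ℝ).map Complex.ofReal).charpoly.eval z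
      = (z - a) * ((z - c) ^ 2 - (e * g : ℝ)) - (b * e * f : ℝ) := by
  rw [Matrix.charpoly, ← Polynomial.coe_evalRingHom, RingHom.map_det, Matrix.det_fin_three]
  simp only [RingHom.mapMatrix_apply, Polynomial.coe_evalRingHom, map_apply, charmatrix_apply_eq,
    of_apply, cons_val', cons_val_zero, cons_val_fin_one, Polynomial.eval_sub, Polynomial.eval_X,
    Polynomial.eval_C, cons_val_one, cons_val, ne_eq, Fin.reduceEq, not_false_eq_true,
    charmatrix_apply_ne, Polynomial.eval_neg, Complex.ofReal_zero, map_zero, Polynomial.eval_zero,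
    Complex.ofReal_mul]
  ring

lemma norm_le_of_isRoot_charpoly_fin_three (ha : 0 ≤ a) (hc : 0 ≤ c) (heg : 0 ≤ e * g)
    (hbef : 0 ≤ b * e * f) (hla : a < lam) (hlc : c < lam)
    (hkey : b * e * f ≤ (lam - a) * ((lam - c) ^ 2 - e * g)) {z : ℂ}
    (hz : ((!![a, b, 0; 0, c, e; f, g, c] : Matrix (Fin 3) (Fin 3) ℝ).map
      Complex.ofReal).charpoly.IsRoot z) :
    ‖z‖ ≤ lam := by
  by_contra! hlt
  have hroot : (z - a) * ((z - c) ^ 2 - (e * g : ℝ)) = (b * e * f : ℝ) := by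
    rw [Polynomial.IsRoot, eval_charpoly_map_ofReal_fin_three] at hz
    exact sub_eq_zero.mp hz
  have hfac1 : ‖z‖ - a ≤ ‖z - a‖ := by
    simpa [abs_of_nonneg ha] using norm_sub_norm_le z (a : ℂ)
  have hfac2 : (‖z‖ - c) ^ 2 - e * g ≤ ‖(z - c) ^ 2 - (e * g : ℝ)‖ := by
    have h1 : ‖z‖ - c ≤ ‖z - c‖ := by
      simpa [abs_of_nonneg hc] using norm_sub_norm_le z (c : ℂ)
    have h2 := norm_sub_norm_le ((z - c) ^ 2) ((e * g : ℝ) : ℂ)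
    rw [norm_pow, Complex.norm_real, Real.norm_of_nonneg heg] at h2
    nlinarith
  have hX : 0 ≤ (lam - c) ^ 2 - e * g :=
    nonneg_of_mul_nonneg_right (hbef.trans hkey) (by linarith)
  have hgrow : (lam - c) ^ 2 - e * g < (‖z‖ - c) ^ 2 - e * g := by nlinarith
  have hcontra : b * e * f < ‖z - a‖ * ‖(z - c) ^ 2 - (e * g : ℝ)‖ :=
    calc b * e * f ≤ (lam - a) * ((lam - c) ^ 2 - e * g) := hkey
      _ < (‖z‖ - a) * ((‖z‖ - c) ^ 2 - e * g) :=
        mul_lt_mul'' (by linarith) hgrow (by linarith) hX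
      _ ≤ ‖z - a‖ * ‖(z - c) ^ 2 - (e * g : ℝ)‖ :=
        mul_le_mul hfac1 hfac2 (hX.trans hgrow.le) (norm_nonneg _)
  rw [← norm_mul, hroot, Complex.norm_real, Real.norm_of_nonneg hbef] at hcontra
  exact hcontra.false

lemma specRad_fin_three_le (ha : 0 ≤ a) (hc : 0 ≤ c) (heg : 0 ≤ e * g)
    (hbef : 0 ≤ b * e * f) (hla : a < lam) (hlc : c < lam)
    (hkey : b * e * f ≤ (lam - a) * ((lam - c) ^ 2 - e * g)) :
    specRad !![a, b, 0; 0, c, e; f, g, c] ≤ lam := by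
  refine Real.sSup_le ?_ (by linarith)
  rintro _ ⟨z, hz, rfl⟩
  exact norm_le_of_isRoot_charpoly_fin_three ha hc heg hbef hla hlc hkey hz

end CharpolyFinThree

section DSGTMatrix

variable {μ L Γ ρ F α : ℝ}

lemma le_beta_mul_sq (hρ : 0 < ρ) (hρ1 : ρ < 1) (hαL : 0 ≤ α * L)
    (h1 : α * L * ρ ≤ (1 - ρ ^ 2) / 12) :
    11 * (1 - ρ ^ 2) / 72 ≤ ((1 - ρ ^ 2) / (2 * ρ ^ 2) - 4 * α * L - 2 * α ^ 2 * L ^ 2) * ρ ^ 2 := by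
  have hY : 0 ≤ α * L * ρ := by positivity
  have hsq : (α * L * ρ) ^ 2 ≤ ((1 - ρ ^ 2) / 12) ^ 2 := pow_le_pow_left₀ hY h1 2
  have : ((1 - ρ ^ 2) / (2 * ρ ^ 2) - 4 * α * L - 2 * α ^ 2 * L ^ 2) * ρ ^ 2
      = (1 - ρ ^ 2) / 2 - 4 * (α * L * ρ) * ρ - 2 * (α * L * ρ) ^ 2 := by
    field_simp
  rw [this]
  nlinarith [mul_le_mul_of_nonneg_right h1 hρ.le]

lemma coupling_entries_mul_le {β G : ℝ} (hρ : 0 < ρ) (hρ1 : ρ < 1) (hα : 0 < α) (hL : 0 < L)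
    (hF : 0 ≤ F) (hG : 0 < G) (hβ : 11 * (1 - ρ ^ 2) / 72 ≤ β * ρ ^ 2)
    (h1 : α * L * ρ ≤ (1 - ρ ^ 2) / 12) (h2 : α * L * ρ * F ≤ (1 - ρ ^ 2) ^ 2 / (12 * G))
    (h2' : α * L ≤ (1 - ρ ^ 2) / (2 * G)) :
    α ^ 2 * ((1 + ρ ^ 2) * ρ ^ 2 / (1 - ρ ^ 2)) * ((1 / β + 2) * F ^ 2 * L ^ 2 + 3 * α * L ^ 3)
      ≤ (1 - ρ ^ 2) ^ 2 * (47 / (396 * G ^ 2) + 1 / (48 * G)) := by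
  set q := 1 - ρ ^ 2
  have hq : 0 < q := by nlinarith
  have hq1 : q ≤ 1 := by nlinarith
  have hρ2 : 1 + ρ ^ 2 ≤ 2 := by nlinarith
  have hβρ : 0 < β * ρ ^ 2 := by linarith
  have hβ0 : 0 < β := (mul_pos_iff_of_pos_right (by positivity)).mp hβρ
  have hρ4 : (1 + ρ ^ 2) * ρ ^ 2 ≤ 2 := by nlinarith
  have hX : (α * L * ρ * F) ^ 2 ≤ q ^ 4 / (144 * G ^ 2) := by
    calc (α * L * ρ * F) ^ 2 ≤ (q ^ 2 / (12 * G)) ^ 2 := by gcongr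
      _ = q ^ 4 / (144 * G ^ 2) := by ring
  have hY : (α * L * ρ) ^ 2 ≤ q ^ 2 / 144 := by
    calc (α * L * ρ) ^ 2 ≤ (q / 12) ^ 2 := by gcongr
      _ = q ^ 2 / 144 := by ring
  have hT1 : α ^ 2 * ((1 + ρ ^ 2) * ρ ^ 2 / q) * (1 / β * F ^ 2 * L ^ 2) ≤ q ^ 2 / (11 * G ^ 2) :=
    calc _ = (1 + ρ ^ 2) * ρ ^ 2 * (α * L * ρ * F) ^ 2 / (q * (β * ρ ^ 2)) := by field_simp
      _ ≤ 2 * (q ^ 4 / (144 * G ^ 2)) / (q * (11 * q / 72)) := by gcongr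
      _ = q ^ 2 / (11 * G ^ 2) := by field_simp; ring
  have hT2 : α ^ 2 * ((1 + ρ ^ 2) * ρ ^ 2 / q) * (2 * F ^ 2 * L ^ 2) ≤ q ^ 2 / (36 * G ^ 2) :=
    calc _ = 2 * (1 + ρ ^ 2) * (α * L * ρ * F) ^ 2 / q := by field_simp
      _ ≤ 2 * 2 * (q ^ 4 / (144 * G ^ 2)) / q := by gcongr
      _ = q ^ 2 / (36 * G ^ 2) * q := by field_simp; ring
      _ ≤ q ^ 2 / (36 * G ^ 2) := mul_le_of_le_one_right (by positivity) hq1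
  have hT3 : α ^ 2 * ((1 + ρ ^ 2) * ρ ^ 2 / q) * (3 * α * L ^ 3) ≤ q ^ 2 / (48 * G) :=
    calc _ = 3 * (1 + ρ ^ 2) * (α * L * ρ) ^ 2 * (α * L) / q := by field_simp
      _ ≤ 3 * 2 * (q ^ 2 / 144) * (q / (2 * G)) / q := by gcongr
      _ = q ^ 2 / (48 * G) := by field_simp; ring
  calc _ = α ^ 2 * ((1 + ρ ^ 2) * ρ ^ 2 / q) * (1 / β * F ^ 2 * L ^ 2)
        + α ^ 2 * ((1 + ρ ^ 2) * ρ ^ 2 / q) * (2 * F ^ 2 * L ^ 2)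
        + α ^ 2 * ((1 + ρ ^ 2) * ρ ^ 2 / q) * (3 * α * L ^ 3) := by ring
    _ ≤ q ^ 2 / (11 * G ^ 2) + q ^ 2 / (36 * G ^ 2) + q ^ 2 / (48 * G) := by gcongr
    _ = q ^ 2 * (47 / (396 * G ^ 2) + 1 / (48 * G)) := by field_simp; ring

lemma numeric_margin_le {G : ℝ} (hG : 0 < G) :
    (G ^ 2 - 1) / (9 * G ^ 2) + (47 / (396 * G ^ 2) + 1 / (48 * G))
      ≤ (3 / 8 + 1 / (8 * G ^ 2)) ^ 2 := by
  have hpoly : 0 ≤ 17 * G ^ 4 - 12 * G ^ 3 + 546 / 11 * G ^ 2 + 9 := by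
    nlinarith [sq_nonneg (G ^ 2 - G), sq_nonneg G]
  field_simp
  nlinarith [hpoly]

lemma coupling_entries_mul_le_sq_sub (hΓ : 1 < Γ) (hρ : 0 < ρ) (hρ1 : ρ < 1) (hα : 0 < α)
    (hL : 0 < L) (hF : 0 ≤ F)
    (h1 : α * L * ρ ≤ (1 - ρ ^ 2) / 12) (h2 : α * L * ρ * F ≤ (1 - ρ ^ 2) ^ 2 / (12 * √Γ))
    (h2' : α * L ≤ (1 - ρ ^ 2) / (2 * √Γ)) (h4 : α * μ ≤ (Γ + 1) / Γ * ((1 - ρ ^ 2) / 8)) :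
    α ^ 2 * ((1 + ρ ^ 2) * ρ ^ 2 / (1 - ρ ^ 2)) *
        ((1 / ((1 - ρ ^ 2) / (2 * ρ ^ 2) - 4 * α * L - 2 * α ^ 2 * L ^ 2) + 2) * F ^ 2 * L ^ 2
          + 3 * α * L ^ 3)
      ≤ ((1 - ρ ^ 2) / 2 - (Γ - 1) / (Γ + 1) * (α * μ)) ^ 2
        - (1 - ρ ^ 2) ^ 2 * ((Γ - 1) / (9 * Γ)) := by
  have hG : 0 < √Γ := Real.sqrt_pos.mpr (by linarith)
  have hGsq : √Γ ^ 2 = Γ := Real.sq_sqrt (by linarith)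
  have hcoup := coupling_entries_mul_le hρ hρ1 hα hL hF hG
    (le_beta_mul_sq hρ hρ1 (by positivity) h1) h1 h2 h2'
  have hnum := numeric_margin_le hG
  rw [hGsq] at hcoup hnum
  set q := 1 - ρ ^ 2
  have hq : 0 < q := by nlinarith
  have hθ : (Γ - 1) / (Γ + 1) * (α * μ) ≤ q * (Γ - 1) / (8 * Γ) :=
    calc _ ≤ (Γ - 1) / (Γ + 1) * ((Γ + 1) / Γ * (q / 8)) := by gcongr
      _ = q * (Γ - 1) / (8 * Γ) := by field_simp
  have hgap : q * (3 / 8 + 1 / (8 * Γ)) ≤ q / 2 - (Γ - 1) / (Γ + 1) * (α * μ) := by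
    have : q / 2 - q * (Γ - 1) / (8 * Γ) = q * (3 / 8 + 1 / (8 * Γ)) := by field_simp; ring
    linarith
  calc _ ≤ q ^ 2 * (47 / (396 * Γ) + 1 / (48 * √Γ)) := hcoup
    _ ≤ q ^ 2 * ((3 / 8 + 1 / (8 * Γ)) ^ 2 - (Γ - 1) / (9 * Γ)) := by gcongr; linarith
    _ = (q * (3 / 8 + 1 / (8 * Γ))) ^ 2 - q ^ 2 * ((Γ - 1) / (9 * Γ)) := by ring
    _ ≤ _ := by gcongr

lemma feedback_entries_mul_le (n : ℕ) (hμ : 0 < μ) (hΓ : 1 < Γ) (hρ : 0 < ρ) (hρ1 : ρ < 1)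
    (hα : 0 < α) (hL : 0 < L) (hαμ : α * μ ≤ 1 / 2)
    (h3 : α ^ 3 * L ^ 5 * ρ ^ 2 ≤ (1 - ρ ^ 2) ^ 3 * μ ^ 2 * ((Γ - 1) / (Γ * (Γ + 1))) / 27) :
    α * L ^ 2 / (μ * n) * (1 + α * μ) * (α ^ 2 * ((1 + ρ ^ 2) * ρ ^ 2 / (1 - ρ ^ 2))) *
        (2 * α * n * L ^ 3)
      ≤ (α * μ - (Γ - 1) / (Γ + 1) * (α * μ)) * ((1 - ρ ^ 2) ^ 2 * ((Γ - 1) / (9 * Γ))) := by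
  set q := 1 - ρ ^ 2
  have hq : 0 < q := by nlinarith
  have hΓ1 : 0 ≤ (Γ - 1) / (Γ * (Γ + 1)) := div_nonneg (by linarith) (by positivity)
  have h3' : (1 + α * μ) * (1 + ρ ^ 2) ≤ 3 := by nlinarith
  calc _ = 2 * α * (α ^ 3 * L ^ 5 * ρ ^ 2) * ((1 + α * μ) * (1 + ρ ^ 2)) / (μ * q)
          * ((n : ℝ) / n) := by ring_nf
    -- `n / n ≤ 1` also covers `n = 0`, where `b = f = 0` by the convention `x / 0 = 0`
    _ ≤ 2 * α * (α ^ 3 * L ^ 5 * ρ ^ 2) * ((1 + α * μ) * (1 + ρ ^ 2)) / (μ * q) :=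
        mul_le_of_le_one_right (by positivity) (div_self_le_one _)
    _ ≤ 2 * α * (q ^ 3 * μ ^ 2 * ((Γ - 1) / (Γ * (Γ + 1))) / 27) * 3 / (μ * q) := by gcongr
    _ = _ := by field_simp; ring

lemma mul_le_div_of_le_sq_div_max {q G : ℝ} (hG : 0 < G) (hL : 0 < L) (hα : 0 ≤ α) (hq : 0 < q)
    (h : α ≤ q ^ 2 / (2 * G * L * max (6 * ρ * F) q)) :
    α * L * ρ * F ≤ q ^ 2 / (12 * G) ∧ α * L ≤ q / (2 * G) := by
  have hM : 0 < max (6 * ρ * F) q := hq.trans_le (le_max_right _ _)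
  rw [le_div_iff₀ (by positivity)] at h
  have hαLG : 0 ≤ α * L * G := by positivity
  constructor
  · rw [le_div_iff₀ (by positivity)]
    nlinarith [mul_le_mul_of_nonneg_left (le_max_left (6 * ρ * F) q) hαLG]
  · rw [le_div_iff₀ (by positivity)]
    nlinarith [mul_le_mul_of_nonneg_left (le_max_right (6 * ρ * F) q) hαLG]

lemma pow_three_mul_le_of_le_mul_rpow {q r : ℝ} (hρ : 0 < ρ) (hL : 0 < L) (hα : 0 ≤ α)
    (hr : 0 ≤ r) (h : α ≤ q / (3 * ρ ^ ((2 : ℝ) / 3) * L) * (μ ^ 2 / L ^ 2 * r) ^ ((1 : ℝ) / 3)) :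
    α ^ 3 * L ^ 5 * ρ ^ 2 ≤ q ^ 3 * μ ^ 2 * r / 27 := by
  have hρ3 : (ρ ^ ((2 : ℝ) / 3)) ^ 3 = ρ ^ 2 := by
    rw [← Real.rpow_natCast, ← Real.rpow_mul hρ.le]; norm_num
  have hr3 : ((μ ^ 2 / L ^ 2 * r) ^ ((1 : ℝ) / 3)) ^ 3 = μ ^ 2 / L ^ 2 * r := by
    rw [← Real.rpow_natCast, ← Real.rpow_mul (by positivity)]; norm_num
  calc α ^ 3 * L ^ 5 * ρ ^ 2
      ≤ (q / (3 * ρ ^ ((2 : ℝ) / 3) * L) * (μ ^ 2 / L ^ 2 * r) ^ ((1 : ℝ) / 3)) ^ 3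
        * L ^ 5 * ρ ^ 2 := by gcongr
    _ = q ^ 3 * μ ^ 2 * r / 27 := by
      rw [mul_pow, div_pow, mul_pow, mul_pow, hρ3, hr3]; field_simp; ring

lemma specRad_le_of_step_bounds (n : ℕ) (hμ : 0 < μ) (hμL : μ ≤ L) (hΓ : 1 < Γ) (hρ : 0 < ρ)
    (hρ1 : ρ < 1) (hF : 0 ≤ F) (hα : 0 < α)
    (h1 : α * L * ρ ≤ (1 - ρ ^ 2) / 12) (h2 : α * L * ρ * F ≤ (1 - ρ ^ 2) ^ 2 / (12 * √Γ))
    (h2' : α * L ≤ (1 - ρ ^ 2) / (2 * √Γ))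
    (h3 : α ^ 3 * L ^ 5 * ρ ^ 2 ≤ (1 - ρ ^ 2) ^ 3 * μ ^ 2 * ((Γ - 1) / (Γ * (Γ + 1))) / 27)
    (h4 : α * μ ≤ (Γ + 1) / Γ * ((1 - ρ ^ 2) / 8)) :
    specRad
        !![1 - α * μ, α * L ^ 2 / (μ * n) * (1 + α * μ), 0;
           0, (1 + ρ ^ 2) / 2, α ^ 2 * ((1 + ρ ^ 2) * ρ ^ 2 / (1 - ρ ^ 2));
           2 * α * n * L ^ 3,
             (1 / ((1 - ρ ^ 2) / (2 * ρ ^ 2) - 4 * α * L - 2 * α ^ 2 * L ^ 2) + 2) *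
                 F ^ 2 * L ^ 2 + 3 * α * L ^ 3,
             (1 + ρ ^ 2) / 2] ≤ 1 - (Γ - 1) / (Γ + 1) * (α * μ) := by
  have hL : 0 < L := hμ.trans_le hμL
  have hq : 0 < 1 - ρ ^ 2 := by nlinarith
  have hαμ : α * μ ≤ (1 - ρ ^ 2) / 4 :=
    calc α * μ ≤ 2 * ((1 - ρ ^ 2) / 8) := h4.trans (by gcongr; rw [div_le_iff₀] <;> linarith)
      _ = (1 - ρ ^ 2) / 4 := by ring
  have hθ : (Γ - 1) / (Γ + 1) * (α * μ) < α * μ :=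
    mul_lt_of_lt_one_left (by positivity) (by rw [div_lt_one] <;> linarith)
  have hβ : 0 < (1 - ρ ^ 2) / (2 * ρ ^ 2) - 4 * α * L - 2 * α ^ 2 * L ^ 2 :=
    (mul_pos_iff_of_pos_right (by positivity)).mp
      ((by positivity : (0 : ℝ) < 11 * (1 - ρ ^ 2) / 72).trans_le
        (le_beta_mul_sq hρ hρ1 (by positivity) h1))
  have hcoup := coupling_entries_mul_le_sq_sub hΓ hρ hρ1 hα hL hF h1 h2 h2' h4
  refine specRad_fin_three_le (by nlinarith) (by positivity) (by positivity) (by positivity)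
    (by linarith) (by linarith) ?_
  calc _ ≤ (α * μ - (Γ - 1) / (Γ + 1) * (α * μ)) * ((1 - ρ ^ 2) ^ 2 * ((Γ - 1) / (9 * Γ))) :=
        feedback_entries_mul_le n hμ hΓ hρ hρ1 hα hL (by nlinarith) h3
    _ ≤ _ := by
      rw [show 1 - (Γ - 1) / (Γ + 1) * (α * μ) - (1 - α * μ)
        = α * μ - (Γ - 1) / (Γ + 1) * (α * μ) by ring,
        show 1 - (Γ - 1) / (Γ + 1) * (α * μ) - (1 + ρ ^ 2) / 2
        = (1 - ρ ^ 2) / 2 - (Γ - 1) / (Γ + 1) * (α * μ) by ring]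
      gcongr
      linarith

end DSGTMatrix

theorem stmt10_general (n : ℕ) (μ L Γ : ℝ)
    (hμ : 0 < μ) (hμL : μ ≤ L) (hΓ : 1 < Γ)
    (W : Matrix (Fin n) (Fin n) ℝ)
    (ρw : ℝ)
    (hρw0 : 0 < ρw) (hρw1 : ρw < 1)
    (α : ℝ) (hα0 : 0 < α)
    (hα : α ≤ min (min ((1 - ρw ^ 2) / (12 * ρw * L))
        ((1 - ρw ^ 2) ^ 2 /
          (2 * Real.sqrt Γ * L * max (6 * ρw * frobNorm (W - 1)) (1 - ρw ^ 2))))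
        (((1 - ρw ^ 2) / (3 * ρw ^ ((2 : ℝ) / 3) * L)) *
          (μ ^ 2 / L ^ 2 * ((Γ - 1) / (Γ * (Γ + 1)))) ^ ((1 : ℝ) / 3)))
    (hα' : α ≤ (Γ + 1) / Γ * ((1 - ρw ^ 2) / (8 * μ))) :
    specRad
        !![1 - α * μ, α * L ^ 2 / (μ * n) * (1 + α * μ), 0;
           0, (1 + ρw ^ 2) / 2, α ^ 2 * ((1 + ρw ^ 2) * ρw ^ 2 / (1 - ρw ^ 2));
           2 * α * n * L ^ 3,
             (1 / ((1 - ρw ^ 2) / (2 * ρw ^ 2) - 4 * α * L - 2 * α ^ 2 * L ^ 2) + 2) *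
                 frobNorm (W - 1) ^ 2 * L ^ 2 + 3 * α * L ^ 3,
             (1 + ρw ^ 2) / 2] ≤ 1 - (Γ - 1) / (Γ + 1) * (α * μ) := by
  have hL : 0 < L := hμ.trans_le hμL
  have hq : 0 < 1 - ρw ^ 2 := by nlinarith
  obtain ⟨hα12, hα3⟩ := le_min_iff.mp hα
  obtain ⟨hα1, hα2⟩ := le_min_iff.mp hα12
  have h1 : α * L * ρw ≤ (1 - ρw ^ 2) / 12 := by
    rw [le_div_iff₀ (by positivity)] at hα1
    rw [le_div_iff₀ (by norm_num)]
    linarith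
  obtain ⟨h2, h2'⟩ := mul_le_div_of_le_sq_div_max (Real.sqrt_pos.mpr (by linarith)) hL hα0.le hq hα2
  have h3 := pow_three_mul_le_of_le_mul_rpow hρw0 hL hα0.le
    (div_nonneg (by linarith) (by positivity)) hα3
  have h4 : α * μ ≤ (Γ + 1) / Γ * ((1 - ρw ^ 2) / 8) :=
    calc α * μ ≤ (Γ + 1) / Γ * ((1 - ρw ^ 2) / (8 * μ)) * μ := by gcongr
      _ = (Γ + 1) / Γ * ((1 - ρw ^ 2) / 8) := by field_simp
  exact specRad_le_of_step_bounds n hμ hμL hΓ hρw0 hρw1 (Real.sqrt_nonneg _) hα0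
    h1 h2 h2' h3 h4

theorem stmt10 (n : ℕ) (hn : 1 ≤ n) (μ L Γ : ℝ)
    (hμ : 0 < μ) (hμL : μ ≤ L) (hΓ : 1 < Γ)
    (W : Matrix (Fin n) (Fin n) ℝ)
    (hWnonneg : ∀ i j, 0 ≤ W i j)
    (hWrow : W.mulVec (fun _ => (1 : ℝ)) = fun _ => (1 : ℝ))
    (hWcol : Matrix.vecMul (fun _ => (1 : ℝ)) W = fun _ => (1 : ℝ))
    (ρw : ℝ) (hρw : ρw = l2OpNorm (W - (n : ℝ)⁻¹ • Matrix.of (fun _ _ : Fin n => (1 : ℝ))))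
    (hρw0 : 0 < ρw) (hρw1 : ρw < 1)
    (α : ℝ) (hα0 : 0 < α)
    (hα : α ≤ min (min ((1 - ρw ^ 2) / (12 * ρw * L))
        ((1 - ρw ^ 2) ^ 2 /
          (2 * Real.sqrt Γ * L * max (6 * ρw * frobNorm (W - 1)) (1 - ρw ^ 2))))
        (((1 - ρw ^ 2) / (3 * ρw ^ ((2 : ℝ) / 3) * L)) *
          (μ ^ 2 / L ^ 2 * ((Γ - 1) / (Γ * (Γ + 1)))) ^ ((1 : ℝ) / 3)))
    (hα' : α ≤ (Γ + 1) / Γ * ((1 - ρw ^ 2) / (8 * μ))) :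
    specRad
        !![1 - α * μ, α * L ^ 2 / (μ * n) * (1 + α * μ), 0;
           0, (1 + ρw ^ 2) / 2, α ^ 2 * ((1 + ρw ^ 2) * ρw ^ 2 / (1 - ρw ^ 2));
           2 * α * n * L ^ 3,
             (1 / ((1 - ρw ^ 2) / (2 * ρw ^ 2) - 4 * α * L - 2 * α ^ 2 * L ^ 2) + 2) *
                 frobNorm (W - 1) ^ 2 * L ^ 2 + 3 * α * L ^ 3,
             (1 + ρw ^ 2) / 2] ≤ 1 - (Γ - 1) / (Γ + 1) * (α * μ) :=
  stmt10_general n μ L Γ hμ hμL hΓ W ρw hρw0 hρw1 α hα0 hα hα'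
end

section
/- Let n ≥ 2 and let Π ∈ ℝ^{n×n} be a nonnegative doubly stochastic matrix such that the graph on {1,…,n} with edge set {{i,j} : i ≠ j, π_{ij} + π_{ji} > 0} is connected. Define W̄ := (1 − 1/n)I + (Π + Πᵀ)/(2n) and let ρ_w̄ be the operator 2-norm of W̄ − (1/n)𝟙𝟙ᵀ. Then 1 − 2/n ≤ ρ_w̄ < 1, and moreover ρ_w̄ = 1 − 1/n + (1/n)·λ₂((Π + Πᵀ)/2), where λ₂((Π + Πᵀ)/2) denotes the second largest eigenvalue (counted with multiplicity) of the symmetric matrix (Π + Πᵀ)/2. -/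
/-!
`S = (Π + Πᵀ)/2` is symmetric and doubly stochastic. By Gershgorin its eigenvalues lie in
`[-1, 1]`, and `1` is one of them (eigenvector `𝟙`). A maximum principle shows that, the support
graph being connected, every fixed vector of `S` is constant; hence the eigenvalue `1` is simple
and `λ₂ < 1`. In an orthonormal eigenbasis of `S` the top eigenvector is constant and is killed
by `W̄ - 𝟙𝟙ᵀ/n`, while every other eigenvector `v` has `∑ v = 0` (as `𝟙ᵀS = 𝟙ᵀ`), so it is an
eigenvector of `W̄ - 𝟙𝟙ᵀ/n` with eigenvalue `1 - 1/n + λ_j/n ∈ [1 - 2/n, 1 - 1/n + λ₂/n]`.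
The operator norm of a map that is diagonal in an orthonormal basis is its largest `|eigenvalue|`.
-/

open Matrix

open Finset

namespace OrthonormalBasis

variable {𝕜 E ι : Type*} [RCLike 𝕜] [NormedAddCommGroup E] [InnerProductSpace 𝕜 E] [Fintype ι]

lemma repr_apply_eq_mul_of_apply_eq_smul (B : OrthonormalBasis ι 𝕜 E) {T : E →L[𝕜] E} {ν : ι → 𝕜}
    (hT : ∀ j, T (B j) = ν j • B j) (x : E) (j : ι) : B.repr (T x) j = ν j * B.repr x j := by
  classical
  conv_lhs => rw [← B.sum_repr x]
  simp [hT, OrthonormalBasis.repr_self, Pi.single_apply, mul_comm]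

lemma opNorm_eq_of_apply_eq_smul (B : OrthonormalBasis ι 𝕜 E) {T : E →L[𝕜] E} {ν : ι → 𝕜}
    (hT : ∀ j, T (B j) = ν j • B j) {j₀ : ι} (hj₀ : ∀ j, ‖ν j‖ ≤ ‖ν j₀‖) :
    ‖T‖ = ‖ν j₀‖ := by
  refine le_antisymm (T.opNorm_le_bound (norm_nonneg _) fun x => ?_) ?_
  · have hsq : ‖T x‖ ^ 2 ≤ (‖ν j₀‖ * ‖x‖) ^ 2 := by
      rw [← B.repr.norm_map, ← B.repr.norm_map x, mul_pow, EuclideanSpace.norm_sq_eq,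
        EuclideanSpace.norm_sq_eq, Finset.mul_sum]
      refine Finset.sum_le_sum fun j _ => ?_
      rw [B.repr_apply_eq_mul_of_apply_eq_smul hT, norm_mul, mul_pow]
      gcongr
      exact hj₀ j
    exact le_of_sq_le_sq hsq (by positivity)
  · simpa [hT, norm_smul] using T.le_opNorm (B j₀)

end OrthonormalBasis

namespace Matrix

variable {ι : Type*} [Fintype ι] [DecidableEq ι] {S : Matrix ι ι ℝ}

lemma abs_le_one_of_hasEigenvalue (hS : S ∈ rowStochastic ℝ ι) {μ : ℝ}
    (hμ : Module.End.HasEigenvalue (toLin' S) μ) : |μ| ≤ 1 := by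
  obtain ⟨k, hk⟩ := eigenvalue_mem_ball hμ
  have hoff : ∑ j ∈ univ.erase k, ‖S k j‖ = 1 - S k k := by
    rw [← sum_row_of_mem_rowStochastic hS k, ← add_sum_erase _ _ (mem_univ k), add_sub_cancel_left]
    exact sum_congr rfl fun j _ => Real.norm_of_nonneg (nonneg_of_mem_rowStochastic hS)
  rw [Metric.mem_closedBall, Real.dist_eq, hoff, abs_le] at hk
  have hkk : 0 ≤ S k k := nonneg_of_mem_rowStochastic hS
  rw [abs_le]
  constructor <;> linarith

lemma hasEigenvalue_one_of_mem_rowStochastic [Nonempty ι] (hS : S ∈ rowStochastic ℝ ι) :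
    Module.End.HasEigenvalue (toLin' S) 1 :=
  Module.End.hasEigenvalue_of_hasEigenvector
    ⟨Module.End.mem_eigenspace_iff.2 (by simpa using one_vecMul_of_mem_rowStochastic hS),
      one_ne_zero⟩

lemma eq_of_mulVec_eq_self_of_pos_of_forall_le (hS : S ∈ rowStochastic ℝ ι) {x : ι → ℝ}
    (hx : S *ᵥ x = x) {a b : ι} (hab : 0 < S a b) (ha : ∀ k, x k ≤ x a) : x b = x a := by
  have hsum : ∑ k, S a k * (x a - x k) = 0 := by
    have hxa : ∑ k, S a k * x k = x a := congrFun hx a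
    simp only [mul_sub, sum_sub_distrib, ← sum_mul, sum_row_of_mem_rowStochastic hS a, hxa]
    ring
  have hterm := (sum_eq_zero_iff_of_nonneg fun k _ =>
    mul_nonneg (nonneg_of_mem_rowStochastic hS) (sub_nonneg.2 (ha k))).1 hsum b (mem_univ b)
  rcases mul_eq_zero.1 hterm with h | h
  · exact absurd h hab.ne'
  · linarith

lemma eq_of_mulVec_eq_self_of_connected (hS : S ∈ rowStochastic ℝ ι) {G : SimpleGraph ι}
    (hG : G.Connected) (hadj : ∀ a b, G.Adj a b → 0 < S a b) {x : ι → ℝ} (hx : S *ᵥ x = x)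
    (i j : ι) : x i = x j := by
  obtain ⟨m, -, hm⟩ := exists_max_image univ x ⟨i, mem_univ i⟩
  have hwalk : ∀ {a b : ι}, G.Walk a b → x a = x m → x b = x m := by
    intro a b w
    induction w with
    | nil => exact id
    | cons hab _ ih =>
      intro ha
      exact ih (ha ▸ eq_of_mulVec_eq_self_of_pos_of_forall_le hS hx (hadj _ _ hab)
        fun k => ha ▸ hm k (mem_univ k))
  rw [hwalk (hG m i).some rfl, hwalk (hG m j).some rfl]

lemma sum_eq_zero_of_mulVec_eq_smul (hS : S ∈ colStochastic ℝ ι) {v : ι → ℝ} {μ : ℝ}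
    (hv : S *ᵥ v = μ • v) (hμ : μ ≠ 1) : ∑ i, v i = 0 := by
  have h := sum_mulVec_of_mem_colStochastic (x := v) hS
  rw [hv] at h
  simp only [Pi.smul_apply, smul_eq_mul, ← mul_sum] at h
  exact eq_zero_of_mul_eq_self_left hμ h

namespace IsHermitian

lemma hasEigenvalue_eigenvalues (hA : S.IsHermitian) (j : ι) :
    Module.End.HasEigenvalue (toLin' S) (hA.eigenvalues j) := by
  rw [Module.End.hasEigenvalue_iff_mem_spectrum, spectrum_toLin']
  exact hA.eigenvalues_mem_spectrum_real j

lemma abs_eigenvalues_le_one (hA : S.IsHermitian) (hS : S ∈ rowStochastic ℝ ι) (j : ι) :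
    |hA.eigenvalues j| ≤ 1 :=
  abs_le_one_of_hasEigenvalue hS (hA.hasEigenvalue_eigenvalues j)

lemma exists_eigenvalues_eq_one [Nonempty ι] (hA : S.IsHermitian) (hS : S ∈ rowStochastic ℝ ι) :
    ∃ j, hA.eigenvalues j = 1 := by
  have h := (hasEigenvalue_one_of_mem_rowStochastic hS).mem_spectrum
  rwa [spectrum_toLin', hA.spectrum_real_eq_range_eigenvalues] at h

lemma mulVec_eigenvectorBasis_of_eigenvalues_eq_one (hA : S.IsHermitian) {j : ι}
    (hj : hA.eigenvalues j = 1) : S *ᵥ ⇑(hA.eigenvectorBasis j) = ⇑(hA.eigenvectorBasis j) := by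
  rw [hA.mulVec_eigenvectorBasis, hj, one_smul]

lemma eq_of_eigenvalues_eq_one (hA : S.IsHermitian) (hS : S ∈ rowStochastic ℝ ι)
    {G : SimpleGraph ι} (hG : G.Connected) (hadj : ∀ a b, G.Adj a b → 0 < S a b) {j k : ι}
    (hj : hA.eigenvalues j = 1) (hk : hA.eigenvalues k = 1) : j = k := by
  set b := hA.eigenvectorBasis
  have hconst : ∀ {p}, hA.eigenvalues p = 1 → ∀ l, b p l = b p j := fun hp l =>
    eq_of_mulVec_eq_self_of_connected hS hG hadj
      (hA.mulVec_eigenvectorBasis_of_eigenvalues_eq_one hp) l j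
  have hinner : ∀ {p q}, hA.eigenvalues p = 1 → hA.eigenvalues q = 1 →
      inner ℝ (b p) (b q) = Fintype.card ι * (b p j * b q j) := by
    intro p q hp hq
    calc inner ℝ (b p) (b q) = ∑ l, b q l * b p l := by simp [PiLp.inner_apply]
      _ = ∑ _l : ι, b q j * b p j := sum_congr rfl fun l _ => by rw [hconst hp l, hconst hq l]
      _ = Fintype.card ι * (b p j * b q j) := by simp [mul_comm]
  by_contra hjk
  have h0 := hinner hj hk
  have h1 := hinner hj hj
  have h2 := hinner hk hk
  rw [b.orthonormal.2 hjk] at h0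
  rw [real_inner_self_eq_norm_sq, b.orthonormal.1, one_pow] at h1 h2
  have : (0 : ℝ) = 1 := by
    calc (0 : ℝ) = (Fintype.card ι * (b j j * b k j)) ^ 2 := by rw [← h0]; ring
      _ = (Fintype.card ι * (b j j * b j j)) * (Fintype.card ι * (b k j * b k j)) := by ring
      _ = 1 := by rw [← h1, ← h2]; ring
  exact zero_ne_one this

lemma eigenvalues_perm_zero_eq_one {n : ℕ} {S : Matrix (Fin n) (Fin n) ℝ} (hA : S.IsHermitian)
    (hS : S ∈ rowStochastic ℝ (Fin n)) (hn : 0 < n) (σ : Equiv.Perm (Fin n))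
    (hσ : Antitone fun i => hA.eigenvalues (σ i)) : hA.eigenvalues (σ ⟨0, hn⟩) = 1 := by
  have : Nonempty (Fin n) := ⟨⟨0, hn⟩⟩
  obtain ⟨j, hj⟩ := hA.exists_eigenvalues_eq_one hS
  refine le_antisymm (abs_le.1 (hA.abs_eigenvalues_le_one hS _)).2 ?_
  calc 1 = hA.eigenvalues j := hj.symm
    _ ≤ _ := by simpa using hσ (show ⟨0, hn⟩ ≤ σ.symm j from Nat.zero_le _)

lemma eigenvalues_perm_one_lt_one {n : ℕ} {S : Matrix (Fin n) (Fin n) ℝ} (hA : S.IsHermitian)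
    (hS : S ∈ rowStochastic ℝ (Fin n)) {G : SimpleGraph (Fin n)} (hG : G.Connected)
    (hadj : ∀ a b, G.Adj a b → 0 < S a b) (hn : 1 < n) (σ : Equiv.Perm (Fin n))
    (hσ : Antitone fun i => hA.eigenvalues (σ i)) : hA.eigenvalues (σ ⟨1, hn⟩) < 1 := by
  refine (abs_le.1 (hA.abs_eigenvalues_le_one hS _)).2.lt_of_ne fun h => ?_
  have h₀ := hA.eigenvalues_perm_zero_eq_one hS (by omega) σ hσ
  exact absurd (σ.injective (hA.eq_of_eigenvalues_eq_one hS hG hadj h h₀)) (by simp)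

end IsHermitian

end Matrix

/-- `W̄ - 𝟙𝟙ᵀ/n` for the lazy matrix `W̄ = (1 - 1/n) I + S/n`. -/
noncomputable def centeredLazyMatrix {n : ℕ} (S : Matrix (Fin n) (Fin n) ℝ) :
    Matrix (Fin n) (Fin n) ℝ :=
  (1 - 1 / (n : ℝ)) • 1 + (n : ℝ)⁻¹ • S - (n : ℝ)⁻¹ • of fun _ _ => 1

section CenteredLazyMatrix

variable {n : ℕ} {S : Matrix (Fin n) (Fin n) ℝ}

lemma centeredLazyMatrix_mulVec (S : Matrix (Fin n) (Fin n) ℝ) (v : Fin n → ℝ) (i : Fin n) :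
    (centeredLazyMatrix S *ᵥ v) i = (1 - 1 / (n : ℝ)) * v i + ((S *ᵥ v) i - ∑ l, v l) / n := by
  have hJ : ((of fun _ _ => (1 : ℝ)) *ᵥ v) i = ∑ l, v l := by simp [mulVec, dotProduct]
  simp only [centeredLazyMatrix, sub_mulVec, add_mulVec, smul_mulVec, one_mulVec, Pi.add_apply,
    Pi.sub_apply, Pi.smul_apply, smul_eq_mul, hJ]
  ring

lemma centeredLazyMatrix_mulVec_of_sum_eq_zero {v : Fin n → ℝ} {μ : ℝ} (hv : S *ᵥ v = μ • v)
    (hsum : ∑ l, v l = 0) : centeredLazyMatrix S *ᵥ v = (1 - 1 / (n : ℝ) + μ / n) • v := by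
  ext i
  rw [centeredLazyMatrix_mulVec, hv, hsum]
  simp only [Pi.smul_apply, smul_eq_mul]
  ring

lemma centeredLazyMatrix_mulVec_of_const {v : Fin n → ℝ} (hv : S *ᵥ v = v) {i₀ : Fin n}
    (hconst : ∀ l, v l = v i₀) : centeredLazyMatrix S *ᵥ v = 0 := by
  have hn : (n : ℝ) ≠ 0 := by
    have : 0 < n := i₀.pos
    positivity
  ext i
  rw [centeredLazyMatrix_mulVec, hv, sum_congr rfl fun l _ => hconst l, hconst i]
  simp only [sum_const, card_univ, Fintype.card_fin, nsmul_eq_mul, Pi.zero_apply]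
  field_simp
  ring

lemma centeredLazyMatrix_mulVec_eigenvectorBasis (hA : S.IsHermitian)
    (hS : S ∈ doublyStochastic ℝ (Fin n)) {G : SimpleGraph (Fin n)} (hG : G.Connected)
    (hadj : ∀ a b, G.Adj a b → 0 < S a b) {j₀ : Fin n} (hj₀ : hA.eigenvalues j₀ = 1) (j : Fin n) :
    centeredLazyMatrix S *ᵥ ⇑(hA.eigenvectorBasis j) =
      (if j = j₀ then 0 else 1 - 1 / (n : ℝ) + hA.eigenvalues j / n) •
        ⇑(hA.eigenvectorBasis j) := by
  obtain ⟨hrow, hcol⟩ := mem_doublyStochastic_iff_mem_rowStochastic_and_mem_colStochastic.1 hS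
  split_ifs with hj
  · subst hj
    have hfix := hA.mulVec_eigenvectorBasis_of_eigenvalues_eq_one hj₀
    rw [zero_smul]
    exact centeredLazyMatrix_mulVec_of_const hfix
      fun l => eq_of_mulVec_eq_self_of_connected hrow hG hadj hfix l j
  · exact centeredLazyMatrix_mulVec_of_sum_eq_zero (hA.mulVec_eigenvectorBasis j)
      (sum_eq_zero_of_mulVec_eq_smul hcol (hA.mulVec_eigenvectorBasis j)
        fun h => hj (hA.eq_of_eigenvalues_eq_one hrow hG hadj h hj₀))

end CenteredLazyMatrix

lemma one_sub_two_div_le {n μ : ℝ} (hn : 0 < n) (hμ : -1 ≤ μ) : 1 - 2 / n ≤ 1 - 1 / n + μ / n := by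
  have : 0 ≤ (μ + 1) / n := div_nonneg (by linarith) hn.le
  linarith [show 1 - 1 / n + μ / n = 1 - 2 / n + (μ + 1) / n by ring]

theorem l2OpNorm_centeredLazyMatrix {n : ℕ} (hn : 2 ≤ n) {S : Matrix (Fin n) (Fin n) ℝ}
    (hA : S.IsHermitian) (hS : S ∈ doublyStochastic ℝ (Fin n)) {G : SimpleGraph (Fin n)}
    (hG : G.Connected) (hadj : ∀ a b, G.Adj a b → 0 < S a b) (σ : Equiv.Perm (Fin n))
    (hσ : Antitone fun i => hA.eigenvalues (σ i)) :
    l2OpNorm (centeredLazyMatrix S) =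
      1 - 1 / n + hA.eigenvalues (σ ⟨1, lt_of_lt_of_le one_lt_two hn⟩) / n := by
  obtain ⟨hrow, hcol⟩ := mem_doublyStochastic_iff_mem_rowStochastic_and_mem_colStochastic.1 hS
  set μ := hA.eigenvalues
  set B := hA.eigenvectorBasis
  set i₀ : Fin n := ⟨0, by omega⟩
  set i₁ : Fin n := ⟨1, lt_of_lt_of_le one_lt_two hn⟩
  have hμ₀ : μ (σ i₀) = 1 := hA.eigenvalues_perm_zero_eq_one hrow _ σ hσ
  have hμ_le : ∀ j ≠ σ i₀, μ j ≤ μ (σ i₁) := by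
    intro j hj
    have : i₁ ≤ σ.symm j := Nat.one_le_iff_ne_zero.2 fun h0 =>
      hj (by simp [← show σ.symm j = i₀ from Fin.ext h0])
    simpa using hσ this
  have hμ_ge : ∀ j, -1 ≤ μ j := fun j => (abs_le.1 (hA.abs_eigenvalues_le_one hrow j)).1
  set ν : Fin n → ℝ := fun j => if j = σ i₀ then 0 else 1 - 1 / n + μ j / n
  have hWB : ∀ j, LinearMap.toContinuousLinearMap (toEuclideanLin (centeredLazyMatrix S)) (B j) =
      ν j • B j := fun j => by
    apply WithLp.ofLp_injective
    simp only [LinearMap.coe_toContinuousLinearMap', ofLp_toLpLin, toLin'_apply, WithLp.ofLp_smul]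
    exact centeredLazyMatrix_mulVec_eigenvectorBasis hA hS hG hadj hμ₀ j
  have hn₀ : (0 : ℝ) < n := by positivity
  have hν_nonneg : ∀ j, 0 ≤ 1 - 1 / (n : ℝ) + μ j / n := fun j =>
    (sub_nonneg.2 ((div_le_one hn₀).2 (by exact_mod_cast hn))).trans
      (one_sub_two_div_le hn₀ (hμ_ge j))
  have hν₁ : ν (σ i₁) = 1 - 1 / n + μ (σ i₁) / n := if_neg (σ.injective.ne (by simp [i₀, i₁]))
  have hν : ∀ j, |ν j| ≤ |ν (σ i₁)| := by
    intro j
    rw [hν₁, abs_of_nonneg (hν_nonneg _)]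
    by_cases hj : j = σ i₀
    · simpa [ν, hj] using hν_nonneg (σ i₁)
    · simp only [ν, if_neg hj]
      rw [abs_of_nonneg (hν_nonneg j)]
      gcongr
      exact hμ_le j hj
  rw [l2OpNorm, B.opNorm_eq_of_apply_eq_smul hWB hν, Real.norm_eq_abs, hν₁,
    abs_of_nonneg (hν_nonneg _)]

lemma exists_perm_antitone {α : Type*} [LinearOrder α] {n : ℕ} (f : Fin n → α) :
    ∃ σ : Equiv.Perm (Fin n), Antitone fun i => f (σ i) :=
  ⟨Fin.revPerm.trans (Tuple.sort f),
    (Tuple.monotone_sort f).comp_antitone fun _ _ => Fin.rev_le_rev.2⟩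

theorem stmt13 (n : ℕ) (hn : 2 ≤ n)
    (Pmat : Matrix (Fin n) (Fin n) ℝ)
    (hPnonneg : ∀ i j, 0 ≤ Pmat i j)
    (hProw : Pmat.mulVec (fun _ => (1 : ℝ)) = fun _ => (1 : ℝ))
    (hPcol : Matrix.vecMul (fun _ => (1 : ℝ)) Pmat = fun _ => (1 : ℝ))
    (hconn : (SimpleGraph.fromRel (fun i j : Fin n => 0 < Pmat i j + Pmat j i)).Connected) :
    1 - 2 / n ≤
        l2OpNorm ((1 - 1 / (n : ℝ)) • (1 : Matrix (Fin n) (Fin n) ℝ) +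
            (2 * (n : ℝ))⁻¹ • (Pmat + Pmat.transpose) -
          (n : ℝ)⁻¹ • Matrix.of (fun _ _ : Fin n => (1 : ℝ))) ∧
      l2OpNorm ((1 - 1 / (n : ℝ)) • (1 : Matrix (Fin n) (Fin n) ℝ) +
            (2 * (n : ℝ))⁻¹ • (Pmat + Pmat.transpose) -
          (n : ℝ)⁻¹ • Matrix.of (fun _ _ : Fin n => (1 : ℝ))) < 1 ∧
      ∀ (hS : ((2 : ℝ)⁻¹ • (Pmat + Pmat.transpose)).IsHermitian) (σ : Equiv.Perm (Fin n)),
        Antitone (fun i => hS.eigenvalues (σ i)) →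
          l2OpNorm ((1 - 1 / (n : ℝ)) • (1 : Matrix (Fin n) (Fin n) ℝ) +
              (2 * (n : ℝ))⁻¹ • (Pmat + Pmat.transpose) -
            (n : ℝ)⁻¹ • Matrix.of (fun _ _ : Fin n => (1 : ℝ))) =
            1 - 1 / n +
              hS.eigenvalues (σ ⟨1, lt_of_lt_of_le one_lt_two hn⟩) / n := by
  set S := (2 : ℝ)⁻¹ • (Pmat + Pmat.transpose)
  have hP : Pmat ∈ doublyStochastic ℝ (Fin n) := mem_doublyStochastic.2 ⟨hPnonneg, hProw, hPcol⟩
  have hS : S ∈ doublyStochastic ℝ (Fin n) := by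
    simp only [S, smul_add]
    exact convex_doublyStochastic hP (transpose_mem_doublyStochastic_iff.2 hP)
      (by norm_num) (by norm_num) (by norm_num)
  have hrow := (mem_doublyStochastic_iff_mem_rowStochastic_and_mem_colStochastic.1 hS).1
  have hadj : ∀ a b, (SimpleGraph.fromRel fun i j : Fin n => 0 < Pmat i j + Pmat j i).Adj a b →
      0 < S a b := by
    rintro a b ⟨-, hab | hba⟩ <;> simp [S] <;> linarith
  have hA : S.IsHermitian := IsHermitian.ext fun i j => by simp [S, add_comm]
  have hW : (1 - 1 / (n : ℝ)) • (1 : Matrix (Fin n) (Fin n) ℝ) +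
      (2 * (n : ℝ))⁻¹ • (Pmat + Pmat.transpose) - (n : ℝ)⁻¹ • of (fun _ _ : Fin n => (1 : ℝ)) =
      centeredLazyMatrix S := by
    rw [centeredLazyMatrix, mul_inv, mul_comm, mul_smul]
  obtain ⟨σ, hσ⟩ := exists_perm_antitone hA.eigenvalues
  have hnorm := l2OpNorm_centeredLazyMatrix hn hA hS hconn hadj σ hσ
  have hn₀ : (0 : ℝ) < n := by positivity
  have hμ₁ := div_lt_div_of_pos_right
    (hA.eigenvalues_perm_one_lt_one hrow hconn hadj (lt_of_lt_of_le one_lt_two hn) σ hσ) hn₀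
  rw [hW]
  refine ⟨?_, ?_, fun hA' σ' hσ' => l2OpNorm_centeredLazyMatrix hn hA' hS hconn hadj σ' hσ'⟩
  · exact hnorm ▸ one_sub_two_div_le hn₀ (abs_le.1 (hA.abs_eigenvalues_le_one hrow _)).1
  · linarith
end

section
/- Let n ≥ 1, p ≥ 1, let Π ∈ ℝ^{n×n} be a nonnegative doubly stochastic matrix, and let ρ_π be the operator 2-norm of Π − (1/n)𝟙𝟙ᵀ. Then for any y_1, …, y_n ∈ ℝ^p with average ȳ := (1/n)∑_{i=1}^n y_i, one has (1/n)∑_{i=1}^n ∑_{j=1}^n π_{ij} ‖y_i + y_j‖² ≤ (2/n)(1 + ρ_π) ∑_{i=1}^n ‖y_i − ȳ‖² + 4‖ȳ‖². -/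
/-! Write `y i = z i + ȳ`, so that `∑ i, z i = 0`. Since `Π` has unit row and column sums,
`∑ i j, π i j * ‖y i + y j‖ ^ 2 = 2 ∑ ‖z i‖ ^ 2 + 2 ∑ π i j ⟪z i, z j⟫ + 4 n ‖ȳ‖ ^ 2`.
Every coordinate vector `(z i k)ᵢ` is orthogonal to `𝟙`, so in the cross term `Π` may be replaced
by `Π - 𝟙𝟙ᵀ / n`; coordinatewise Cauchy–Schwarz then bounds it by `ρ_π ∑ ‖z i‖ ^ 2`. -/

open Matrix

open RealInnerProductSpace

section

variable {ι : Type*} [Fintype ι]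

lemma sum_sub_inv_card_smul_sum {E : Type*} [AddCommGroup E] [Module ℝ E] (y : ι → E) :
    ∑ i, (y i - (Fintype.card ι : ℝ)⁻¹ • ∑ l, y l) = 0 := by
  cases isEmpty_or_nonempty ι
  · simp
  · rw [Finset.sum_sub_distrib, Finset.sum_const, Finset.card_univ, ← Nat.cast_smul_eq_nsmul ℝ,
      smul_smul, mul_inv_cancel₀ (Nat.cast_ne_zero.2 Fintype.card_ne_zero), one_smul, sub_self]

lemma sum_sum_mul_eq_sum_of_row_sums {P : Matrix ι ι ℝ} (hrow : ∀ i, ∑ j, P i j = 1) (f : ι → ℝ) :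
    ∑ i, ∑ j, P i j * f i = ∑ i, f i := by
  simp only [← Finset.sum_mul, hrow, one_mul]

lemma sum_sum_mul_eq_sum_of_col_sums {P : Matrix ι ι ℝ} (hcol : ∀ j, ∑ i, P i j = 1) (f : ι → ℝ) :
    ∑ i, ∑ j, P i j * f j = ∑ j, f j := by
  rw [Finset.sum_comm]
  simp only [← Finset.sum_mul, hcol, one_mul]

lemma norm_add_add_add_sq {E : Type*} [NormedAddCommGroup E] [InnerProductSpace ℝ E] (u v c : E) :
    ‖(u + c) + (v + c)‖ ^ 2 = (‖u‖ ^ 2 + 4 * ⟪u, c⟫ + 2 * ‖c‖ ^ 2)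
      + (‖v‖ ^ 2 + 4 * ⟪v, c⟫ + 2 * ‖c‖ ^ 2) + 2 * ⟪u, v⟫ := by
  rw [← real_inner_self_eq_norm_sq, ← real_inner_self_eq_norm_sq u,
    ← real_inner_self_eq_norm_sq v, ← real_inner_self_eq_norm_sq c]
  simp only [inner_add_left, inner_add_right, real_inner_comm u c, real_inner_comm v c,
    real_inner_comm u v]
  ring

lemma sum_sum_mul_norm_add_sq {E : Type*} [NormedAddCommGroup E] [InnerProductSpace ℝ E]
    {P : Matrix ι ι ℝ} (hrow : ∀ i, ∑ j, P i j = 1) (hcol : ∀ j, ∑ i, P i j = 1)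
    {y : ι → E} {c : E} (hc : ∑ i, (y i - c) = 0) :
    ∑ i, ∑ j, P i j * ‖y i + y j‖ ^ 2 =
      2 * ∑ i, ‖y i - c‖ ^ 2 + 2 * ∑ i, ∑ j, P i j * ⟪y i - c, y j - c⟫
        + 4 * Fintype.card ι * ‖c‖ ^ 2 := by
  set g : ι → ℝ := fun i => ‖y i - c‖ ^ 2 + 4 * ⟪y i - c, c⟫ + 2 * ‖c‖ ^ 2
  have hg : ∑ i, g i = ∑ i, ‖y i - c‖ ^ 2 + 2 * Fintype.card ι * ‖c‖ ^ 2 := by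
    simp only [g, Finset.sum_add_distrib, ← Finset.mul_sum, ← sum_inner, hc, inner_zero_left]
    simp only [mul_zero, add_zero, Finset.sum_const, Finset.card_univ, nsmul_eq_mul]
    ring
  have hpoint : ∀ i j, P i j * ‖y i + y j‖ ^ 2 =
      P i j * g i + P i j * g j + 2 * (P i j * ⟪y i - c, y j - c⟫) := by
    intro i j
    have := norm_add_add_add_sq (y i - c) (y j - c) c
    rw [sub_add_cancel, sub_add_cancel] at this
    rw [this]
    ring
  simp only [hpoint, Finset.sum_add_distrib, ← Finset.mul_sum,
    sum_sum_mul_eq_sum_of_row_sums hrow, sum_sum_mul_eq_sum_of_col_sums hcol, hg]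
  ring

lemma dotProduct_sub_smul_ones_mulVec {v : ι → ℝ} (hv : ∑ i, v i = 0) (P : Matrix ι ι ℝ) (c : ℝ) :
    v ⬝ᵥ (P - c • of fun _ _ => 1) *ᵥ v = v ⬝ᵥ P *ᵥ v := by
  simp [mulVec, dotProduct, sub_mul, ← Finset.mul_sum, hv]

variable [DecidableEq ι]

lemma dotProduct_mulVec_le_opNorm_mul (M : Matrix ι ι ℝ) (v : ι → ℝ) :
    v ⬝ᵥ M *ᵥ v ≤ ‖LinearMap.toContinuousLinearMap (toEuclideanLin M)‖ * (v ⬝ᵥ v) := by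
  set x : EuclideanSpace ℝ ι := WithLp.toLp 2 v
  have hx : ‖x‖ ^ 2 = v ⬝ᵥ v := by
    rw [← real_inner_self_eq_norm_sq, EuclideanSpace.inner_toLp_toLp, star_trivial]
  calc v ⬝ᵥ M *ᵥ v = ⟪x, LinearMap.toContinuousLinearMap (toEuclideanLin M) x⟫ := by
        rw [EuclideanSpace.inner_eq_star_dotProduct, star_trivial, dotProduct_comm]; rfl
    _ ≤ ‖x‖ * ‖LinearMap.toContinuousLinearMap (toEuclideanLin M) x‖ := real_inner_le_norm _ _
    _ ≤ ‖x‖ * (‖LinearMap.toContinuousLinearMap (toEuclideanLin M)‖ * ‖x‖) := by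
        gcongr; exact ContinuousLinearMap.le_opNorm _ _
    _ = _ := by rw [← hx]; ring

lemma sum_sum_mul_inner_le {κ : Type*} [Fintype κ] {z : ι → EuclideanSpace ℝ κ}
    (hz : ∑ i, z i = 0) (P : Matrix ι ι ℝ) (c : ℝ) :
    ∑ i, ∑ j, P i j * ⟪z i, z j⟫ ≤
      ‖LinearMap.toContinuousLinearMap (toEuclideanLin (P - c • of fun _ _ => 1))‖ *
        ∑ i, ‖z i‖ ^ 2 := by
  set v : κ → ι → ℝ := fun k i => z i k
  have hv : ∀ k, ∑ i, v k i = 0 := fun k => by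
    simpa [v, Finset.sum_apply] using congrArg (fun w : EuclideanSpace ℝ κ => w k) hz
  have hlhs : ∑ i, ∑ j, P i j * ⟪z i, z j⟫ = ∑ k, v k ⬝ᵥ P *ᵥ v k := by
    simp only [EuclideanSpace.inner_eq_star_dotProduct, star_trivial, dotProduct, mulVec,
      Finset.mul_sum]
    conv_rhs => rw [Finset.sum_comm]; enter [2, x]; rw [Finset.sum_comm]
    exact Finset.sum_congr rfl fun i _ => Finset.sum_congr rfl fun j _ =>
      Finset.sum_congr rfl fun k _ => by ring
  have hrhs : ∑ i, ‖z i‖ ^ 2 = ∑ k, v k ⬝ᵥ v k := by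
    simp only [← real_inner_self_eq_norm_sq, EuclideanSpace.inner_eq_star_dotProduct, star_trivial,
      dotProduct]
    exact Finset.sum_comm
  rw [hlhs, hrhs, Finset.mul_sum]
  refine Finset.sum_le_sum fun k _ => ?_
  rw [← dotProduct_sub_smul_ones_mulVec (hv k) P c]
  exact dotProduct_mulVec_le_opNorm_mul _ _

end

theorem stmt16_general (n p : ℕ)
    (Pmat : Matrix (Fin n) (Fin n) ℝ)
    (hProw : Pmat.mulVec (fun _ => (1 : ℝ)) = fun _ => (1 : ℝ))
    (hPcol : Matrix.vecMul (fun _ => (1 : ℝ)) Pmat = fun _ => (1 : ℝ))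
    (y : Fin n → EuclideanSpace ℝ (Fin p)) :
    (n : ℝ)⁻¹ * ∑ i, ∑ j, Pmat i j * ‖y i + y j‖ ^ 2 ≤
      2 / n *
          (1 + l2OpNorm (Pmat - (n : ℝ)⁻¹ • Matrix.of (fun _ _ : Fin n => (1 : ℝ)))) *
          (∑ i, ‖y i - (n : ℝ)⁻¹ • ∑ l, y l‖ ^ 2) +
        4 * ‖(n : ℝ)⁻¹ • ∑ l, y l‖ ^ 2 := by
  have hrow : ∀ i, ∑ j, Pmat i j = 1 := fun i => by
    simpa [mulVec, dotProduct] using congrFun hProw i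
  have hcol : ∀ j, ∑ i, Pmat i j = 1 := fun j => by
    simpa [vecMul, dotProduct] using congrFun hPcol j
  have hmean : ∑ i, (y i - (n : ℝ)⁻¹ • ∑ l, y l) = 0 := by
    simpa using sum_sub_inv_card_smul_sum y
  rw [sum_sum_mul_norm_add_sq hrow hcol hmean, Fintype.card_fin]
  set c := (n : ℝ)⁻¹ • ∑ l, y l
  set A := ∑ i, ‖y i - c‖ ^ 2
  set S := ∑ i, ∑ j, Pmat i j * ⟪y i - c, y j - c⟫
  calc (n : ℝ)⁻¹ * (2 * A + 2 * S + 4 * n * ‖c‖ ^ 2)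
      = 2 / n * (A + S) + 4 * ((n : ℝ)⁻¹ * n) * ‖c‖ ^ 2 := by ring
    _ ≤ 2 / n * (A + l2OpNorm (Pmat - (n : ℝ)⁻¹ • of fun _ _ => 1) * A) + 4 * 1 * ‖c‖ ^ 2 := by
        gcongr
        · exact sum_sum_mul_inner_le hmean Pmat (n : ℝ)⁻¹
        · exact inv_mul_le_one
    _ = _ := by ring

theorem stmt16 (n p : ℕ) (hn : 1 ≤ n) (hp : 1 ≤ p)
    (Pmat : Matrix (Fin n) (Fin n) ℝ)
    (hPnonneg : ∀ i j, 0 ≤ Pmat i j)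
    (hProw : Pmat.mulVec (fun _ => (1 : ℝ)) = fun _ => (1 : ℝ))
    (hPcol : Matrix.vecMul (fun _ => (1 : ℝ)) Pmat = fun _ => (1 : ℝ))
    (y : Fin n → EuclideanSpace ℝ (Fin p)) :
    (n : ℝ)⁻¹ * ∑ i, ∑ j, Pmat i j * ‖y i + y j‖ ^ 2 ≤
      2 / n *
          (1 + l2OpNorm (Pmat - (n : ℝ)⁻¹ • Matrix.of (fun _ _ : Fin n => (1 : ℝ)))) *
          (∑ i, ‖y i - (n : ℝ)⁻¹ • ∑ l, y l‖ ^ 2) +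
        4 * ‖(n : ℝ)⁻¹ • ∑ l, y l‖ ^ 2 :=
  stmt16_general n p Pmat hProw hPcol y
end

section
/- Let p ≥ 1, L > 0, σ > 0, a ≥ 0, and let φ : ℝ^p → ℝ^p be L-Lipschitz. Let c and g be independent random vectors in ℝ^p with finite second moments, with E[g] = m and E[‖g − m‖²] ≤ σ². Then E[⟨φ(c − a·g), m − g⟩] ≤ a·L·σ². -/
/-!
Replace `g` by its mean `m` inside `φ`: the vector `φ (c - a • m)` is a function of `c` alone, hence
independent of the centred vector `m - g`, so its inner product with `m - g` has expectation zero.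
What remains, the inner product of `φ (c - a • g) - φ (c - a • m)` with `m - g`, is bounded
pointwise by `a * L * ‖g - m‖ ^ 2` by Cauchy–Schwarz and the Lipschitz bound.
-/

open MeasureTheory ProbabilityTheory
open scoped RealInnerProductSpace

theorem LipschitzWith.inner_sub_comp_sub_smul_le {E : Type*} [NormedAddCommGroup E]
    [InnerProductSpace ℝ E] {φ : E → E} {K : NNReal} (hφ : LipschitzWith K φ) {a : ℝ}
    (ha : 0 ≤ a) (x y z : E) :
    ⟪φ (x - a • y) - φ (x - a • z), z - y⟫ ≤ a * K * ‖y - z‖ ^ 2 :=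
  calc ⟪φ (x - a • y) - φ (x - a • z), z - y⟫
      ≤ ‖φ (x - a • y) - φ (x - a • z)‖ * ‖z - y‖ := real_inner_le_norm _ _
    _ ≤ K * ‖(x - a • y) - (x - a • z)‖ * ‖z - y‖ := by
        gcongr; exact hφ.norm_sub_le _ _
    _ = a * K * ‖y - z‖ ^ 2 := by
        rw [sub_sub_sub_cancel_left, ← smul_sub, norm_smul, Real.norm_of_nonneg ha,
          norm_sub_rev z y]
        ring

theorem LipschitzWith.memLp_comp {Ω E F : Type*} [MeasurableSpace Ω] {μ : Measure Ω}
    [IsFiniteMeasure μ] [NormedAddCommGroup E] [NormedAddCommGroup F]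
    {φ : E → F} {K : NNReal} (hφ : LipschitzWith K φ) {f : Ω → E} {p : ENNReal}
    (hf : MemLp f p μ) : MemLp (fun ω => φ (f ω)) p μ := by
  have hφ₀ : LipschitzWith K (fun x => φ x - φ 0) := fun x y => by
    simpa only [edist_sub_right] using hφ x y
  convert (hφ₀.comp_memLp (sub_self _) hf).add (memLp_const (φ 0)) using 1
  ext ω
  simp

section InnerProduct

variable {Ω E : Type*} [MeasurableSpace Ω] {μ : Measure Ω}
  [NormedAddCommGroup E] [InnerProductSpace ℝ E]

theorem MeasureTheory.MemLp.integrable_inner {f g : Ω → E} (hf : MemLp f 2 μ) (hg : MemLp g 2 μ) :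
    Integrable (fun ω => ⟪f ω, g ω⟫) μ :=
  (L2.integrable_inner (𝕜 := ℝ) (hf.toLp f) (hg.toLp g)).congr <| by
    filter_upwards [hf.coeFn_toLp, hg.coeFn_toLp] with ω hfω hgω
    rw [hfω, hgω]

variable [CompleteSpace E] [MeasurableSpace E] [BorelSpace E]

theorem ProbabilityTheory.IndepFun.integral_inner {X Y : Ω → E} (hXY : IndepFun X Y μ)
    (hX : Integrable X μ) (hY : Integrable Y μ) :
    ∫ ω, ⟪X ω, Y ω⟫ ∂μ = ⟪∫ ω, X ω ∂μ, ∫ ω, Y ω ∂μ⟫ :=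
  hXY.integral_bilin hX hY (innerSL ℝ)

theorem integral_inner_lipschitz_comp_sub_smul_le [IsProbabilityMeasure μ] {φ : E → E}
    {K : NNReal} (hφ : LipschitzWith K φ) {a : ℝ} (ha : 0 ≤ a) {c g : Ω → E}
    (hcg : IndepFun c g μ) (hc : MemLp c 2 μ) (hg : MemLp g 2 μ) {m : E}
    (hm : ∫ ω, g ω ∂μ = m) :
    ∫ ω, ⟪φ (c ω - a • g ω), m - g ω⟫ ∂μ ≤ a * K * ∫ ω, ‖g ω - m‖ ^ 2 ∂μ := by
  set ψ : Ω → E := fun ω => φ (c ω - a • m)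
  have hψ : MemLp ψ 2 μ := hφ.memLp_comp (hc.sub (memLp_const _))
  have hφcg : MemLp (fun ω => φ (c ω - a • g ω)) 2 μ := hφ.memLp_comp (hc.sub (hg.const_smul a))
  have hmg : MemLp (fun ω => m - g ω) 2 μ := (memLp_const m).sub hg
  have hcentered : ∫ ω, ⟪ψ ω, m - g ω⟫ ∂μ = 0 := by
    have hindep : IndepFun ψ (fun ω => m - g ω) μ :=
      hcg.comp (hφ.continuous.comp (continuous_sub_right _)).measurable
        (continuous_sub_left m).measurable
    rw [hindep.integral_inner (hψ.integrable one_le_two) (hmg.integrable one_le_two),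
      integral_sub (integrable_const m) (hg.integrable one_le_two), hm, integral_const]
    simp
  have hgap : Integrable (fun ω => ⟪φ (c ω - a • g ω) - ψ ω, m - g ω⟫) μ :=
    (hφcg.sub hψ).integrable_inner hmg
  calc ∫ ω, ⟪φ (c ω - a • g ω), m - g ω⟫ ∂μ
      = ∫ ω, ⟪φ (c ω - a • g ω) - ψ ω, m - g ω⟫ ∂μ + ∫ ω, ⟪ψ ω, m - g ω⟫ ∂μ := by
        rw [← integral_add hgap (hψ.integrable_inner hmg)]
        simp only [inner_sub_left, sub_add_cancel]
    _ = ∫ ω, ⟪φ (c ω - a • g ω) - ψ ω, m - g ω⟫ ∂μ := by rw [hcentered, add_zero]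
    _ ≤ ∫ ω, a * K * ‖g ω - m‖ ^ 2 ∂μ :=
        integral_mono hgap ((hg.sub (memLp_const m)).norm.integrable_sq.const_mul _)
          fun ω => hφ.inner_sub_comp_sub_smul_le ha _ _ _
    _ = a * K * ∫ ω, ‖g ω - m‖ ^ 2 ∂μ := integral_const_mul _ _

end InnerProduct

theorem stmt17_general (p : ℕ) (L σ a : ℝ) (hL : 0 < L) (ha : 0 ≤ a)
    (φ : EuclideanSpace ℝ (Fin p) → EuclideanSpace ℝ (Fin p))
    (hφ : LipschitzWith (Real.toNNReal L) φ)
    {Ω : Type*} [MeasurableSpace Ω] (P : Measure Ω) [IsProbabilityMeasure P]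
    (c g : Ω → EuclideanSpace ℝ (Fin p))
    (hindep : IndepFun c g P)
    (hcL2 : MemLp c 2 P) (hgL2 : MemLp g 2 P)
    (m : EuclideanSpace ℝ (Fin p))
    (hmean : ∫ ω, g ω ∂P = m)
    (hvar : ∫ ω, ‖g ω - m‖ ^ 2 ∂P ≤ σ ^ 2) :
    (∫ ω, ⟪φ (c ω - a • g ω), m - g ω⟫ ∂P) ≤ a * L * σ ^ 2 := by
  have h := integral_inner_lipschitz_comp_sub_smul_le hφ ha hindep hcL2 hgL2 hmean
  rw [Real.coe_toNNReal L hL.le] at h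
  exact h.trans (mul_le_mul_of_nonneg_left hvar (mul_nonneg ha hL.le))

theorem stmt17 (p : ℕ) (hp : 1 ≤ p) (L σ a : ℝ) (hL : 0 < L) (hσ : 0 < σ) (ha : 0 ≤ a)
    (φ : EuclideanSpace ℝ (Fin p) → EuclideanSpace ℝ (Fin p))
    (hφ : LipschitzWith (Real.toNNReal L) φ)
    {Ω : Type*} [MeasurableSpace Ω] (P : Measure Ω) [IsProbabilityMeasure P]
    (c g : Ω → EuclideanSpace ℝ (Fin p))
    (hindep : IndepFun c g P)
    (hcL2 : MemLp c 2 P) (hgL2 : MemLp g 2 P)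
    (m : EuclideanSpace ℝ (Fin p))
    (hmean : ∫ ω, g ω ∂P = m)
    (hvar : ∫ ω, ‖g ω - m‖ ^ 2 ∂P ≤ σ ^ 2) :
    (∫ ω, ⟪φ (c ω - a • g ω), m - g ω⟫ ∂P) ≤ a * L * σ ^ 2 :=
  stmt17_general p L σ a hL ha φ hφ P c g hindep hcL2 hgL2 m hmean hvar
end
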